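/- arXiv:1801.07931 — 6 statements merged into one kernel-verified Lean document; each statement's English description precedes it below -/
import Mathlib

section
/- If X₁ and X₂ are nonnegative random variables such that X₁ is regularly varying with index α₁ ≥ 0 and P(X₂ > x) = o(P(X₁ > x)) as x → ∞, then P(X₁ + X₂ > x) ∼ P(X₁ > x) as x → ∞; in particular X₁ + X₂ is regularly varying with index α₁. -/
open MeasureTheory Filter Topology

/-- The tail function `x ↦ P(X > x)` as a real number. -/
noncomputable def tailP {Ω : Type*} [MeasurableSpace Ω] (μ : Measure Ω) (X : Ω → ℝ) (x : ℝ) : ℝ :=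
  (μ {ω | x < X ω}).toReal

/-- A nonnegative random variable `X` is regularly varying with index `α ≥ 0` if
`P(X > x) > 0` for all `x > 0` and `P(X > qx)/P(X > x) → q^{-α}` for all `q > 0`. -/
def RegVaryRV {Ω : Type*} [MeasurableSpace Ω] (μ : Measure Ω) (X : Ω → ℝ) (α : ℝ) : Prop :=
  (∀ x > 0, 0 < μ {ω | x < X ω}) ∧
  ∀ q > 0, Tendsto (fun x : ℝ => tailP μ X (q * x) / tailP μ X x) atTop (𝓝 (q ^ (-α)))

theorem stmt7 {Ω : Type*} [MeasurableSpace Ω] (μ : Measure Ω) [IsProbabilityMeasure μ]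
    (X₁ X₂ : Ω → ℝ) (h1m : Measurable X₁) (h2m : Measurable X₂)
    (h10 : ∀ ω, 0 ≤ X₁ ω) (h20 : ∀ ω, 0 ≤ X₂ ω)
    (α₁ : ℝ) (hα₁ : 0 ≤ α₁) (hX₁ : RegVaryRV μ X₁ α₁)
    (hlittle : Tendsto (fun x : ℝ => tailP μ X₂ x / tailP μ X₁ x) atTop (𝓝 0)) :
    Tendsto (fun x : ℝ => tailP μ (fun ω => X₁ ω + X₂ ω) x / tailP μ X₁ x) atTop (𝓝 1) ∧
    RegVaryRV μ (fun ω => X₁ ω + X₂ ω) α₁ := by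
  set S : Ω → ℝ := fun ω => X₁ ω + X₂ ω with hSdef
  have hsub : ∀ x : ℝ, {ω | x < X₁ ω} ⊆ {ω | x < S ω} := by
    intro x ω hω
    simp only [Set.mem_setOf_eq, hSdef] at *
    have := h20 ω; linarith
  have hT1pos : ∀ x > 0, 0 < tailP μ X₁ x := fun x hx =>
    ENNReal.toReal_pos (hX₁.1 x hx).ne' (measure_ne_top μ _)
  have hle : ∀ x : ℝ, tailP μ X₁ x ≤ tailP μ S x := fun x =>
    ENNReal.toReal_mono (measure_ne_top μ _) (measure_mono (hsub x))
  have hTSpos : ∀ x > 0, 0 < tailP μ S x := fun x hx => lt_of_lt_of_le (hT1pos x hx) (hle x)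
  have hupper : ∀ ε x : ℝ, tailP μ S x ≤ tailP μ X₁ ((1 - ε) * x) + tailP μ X₂ (ε * x) := by
    intro ε x
    have hsub2 : {ω | x < S ω} ⊆ {ω | (1 - ε) * x < X₁ ω} ∪ {ω | ε * x < X₂ ω} := by
      intro ω hω
      simp only [Set.mem_setOf_eq, Set.mem_union, hSdef] at *
      by_contra h
      push_neg at h
      have hx : (1 - ε) * x + ε * x = x := by ring
      linarith [h.1, h.2]
    calc tailP μ S x ≤ (μ ({ω | (1 - ε) * x < X₁ ω} ∪ {ω | ε * x < X₂ ω})).toReal :=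
          ENNReal.toReal_mono (measure_ne_top μ _) (measure_mono hsub2)
      _ ≤ tailP μ X₁ ((1 - ε) * x) + tailP μ X₂ (ε * x) := by
          rw [tailP, tailP, ← ENNReal.toReal_add (measure_ne_top μ _) (measure_ne_top μ _)]
          exact ENNReal.toReal_mono
            (ENNReal.add_ne_top.2 ⟨measure_ne_top μ _, measure_ne_top μ _⟩)
            (measure_union_le _ _)
  have hmain : Tendsto (fun x : ℝ => tailP μ S x / tailP μ X₁ x) atTop (𝓝 1) := by
    rw [Metric.tendsto_atTop]
    intro δ hδ
    -- choose ε small with (1-ε)^(-α₁) < 1 + δ/2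
    have hcont : ContinuousAt (fun t : ℝ => (1 - t) ^ (-α₁)) 0 := by
      apply ContinuousAt.rpow_const (by fun_prop)
      left; norm_num
    have hc1 : Tendsto (fun t : ℝ => (1 - t) ^ (-α₁)) (𝓝 0) (𝓝 1) := by
      have : ((1 : ℝ) - 0) ^ (-α₁) = 1 := by norm_num
      simpa [ContinuousAt, this] using hcont
    have hev : ∀ᶠ t in 𝓝 (0 : ℝ), (1 - t) ^ (-α₁) < 1 + δ / 2 :=
      hc1.eventually_lt_const (by linarith)
    obtain ⟨η, hη, hball⟩ := Metric.eventually_nhds_iff.mp hev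
    set ε : ℝ := min (η / 2) (1 / 2) with hεdef
    have hε : 0 < ε := lt_min (by linarith) (by norm_num)
    have hε1 : ε < 1 := lt_of_le_of_lt (min_le_right _ _) (by norm_num)
    have hεη : dist ε 0 < η := by
      rw [Real.dist_eq, sub_zero, abs_of_pos hε]
      exact lt_of_le_of_lt (min_le_left _ _) (by linarith)
    have hεlt : (1 - ε) ^ (-α₁) < 1 + δ / 2 := hball hεη
    -- tail of X₂ at εx over tail of X₁ at x goes to 0
    have hcomp : Tendsto (fun x : ℝ => ε * x) atTop atTop := tendsto_id.const_mul_atTop hε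
    have h2 : Tendsto (fun x : ℝ => tailP μ X₂ (ε * x) / tailP μ X₁ (ε * x)) atTop (𝓝 0) :=
      hlittle.comp hcomp
    have h3 := hX₁.2 ε hε
    have hprod : Tendsto (fun x : ℝ => tailP μ X₂ (ε * x) / tailP μ X₁ x) atTop (𝓝 0) := by
      have := h2.mul h3
      rw [zero_mul] at this
      refine this.congr' ?_
      filter_upwards [eventually_gt_atTop (0 : ℝ)] with x hx
      have h1ne : tailP μ X₁ (ε * x) ≠ 0 := (hT1pos _ (by positivity)).ne'
      exact div_mul_div_cancel₀ h1ne
    have hg : Tendsto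
        (fun x : ℝ => tailP μ X₁ ((1 - ε) * x) / tailP μ X₁ x
          + tailP μ X₂ (ε * x) / tailP μ X₁ x) atTop (𝓝 ((1 - ε) ^ (-α₁) + 0)) :=
      (hX₁.2 (1 - ε) (by linarith)).add hprod
    have hglt : ∀ᶠ x in atTop, tailP μ X₁ ((1 - ε) * x) / tailP μ X₁ x
          + tailP μ X₂ (ε * x) / tailP μ X₁ x < 1 + δ :=
      hg.eventually_lt_const (by rw [add_zero]; linarith)
    have hfin : ∀ᶠ x in atTop, dist (tailP μ S x / tailP μ X₁ x) 1 < δ := by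
      filter_upwards [hglt, eventually_gt_atTop (0 : ℝ)] with x hgx hx
      have hpos := hT1pos x hx
      have hlow : 1 ≤ tailP μ S x / tailP μ X₁ x := (one_le_div hpos).2 (hle x)
      have hup : tailP μ S x / tailP μ X₁ x
          ≤ tailP μ X₁ ((1 - ε) * x) / tailP μ X₁ x + tailP μ X₂ (ε * x) / tailP μ X₁ x := by
        rw [← add_div]
        exact div_le_div_of_nonneg_right (hupper ε x) hpos.le
      rw [Real.dist_eq, abs_lt]
      constructor <;> linarith
    exact eventually_atTop.mp hfin
  refine ⟨hmain, ?_, ?_⟩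
  · intro x hx
    exact lt_of_lt_of_le (hX₁.1 x hx) (measure_mono (hsub x))
  · intro q hq
    have hq1 : Tendsto (fun x : ℝ => tailP μ S (q * x) / tailP μ X₁ (q * x)) atTop (𝓝 1) :=
      hmain.comp (tendsto_id.const_mul_atTop hq)
    have h2 := hX₁.2 q hq
    have h3 : Tendsto (fun x : ℝ => tailP μ X₁ x / tailP μ S x) atTop (𝓝 1) := by
      have := hmain.inv₀ one_ne_zero
      simp only [inv_div, inv_one] at this
      exact this
    have htot := (hq1.mul h2).mul h3
    rw [one_mul, mul_one] at htot
    refine htot.congr' ?_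
    filter_upwards [eventually_gt_atTop (0 : ℝ)] with x hx
    have hqx : (0 : ℝ) < q * x := by positivity
    have h1 : tailP μ X₁ (q * x) ≠ 0 := (hT1pos _ hqx).ne'
    have h2' : tailP μ X₁ x ≠ 0 := (hT1pos x hx).ne'
    have h3' : tailP μ S x ≠ 0 := (hTSpos x hx).ne'
    field_simp
end

section
/- If X₁ and X₂ are independent nonnegative regularly varying random variables, both with index α ≥ 0, then P(X₁ + X₂ > x) ∼ P(X₁ > x) + P(X₂ > x) as x → ∞, and X₁ + X₂ is regularly varying with index α. -/
open MeasureTheory Filter Topology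

/-!
Write `F̄ᵢ(x) = P(Xᵢ > x)`. The event `{X₁ + X₂ > x}` contains `{X₁ > x} ∪ {X₂ > x}`, of probability
`F̄₁ + F̄₂ - F̄₁F̄₂ ≥ (F̄₁ + F̄₂)(1 - F̄₂)`. Conversely, for `0 < q < 1` it is contained in
`{X₁ > qx} ∪ {X₂ > qx} ∪ ({X₁ > (1-q)x} ∩ {X₂ > (1-q)x})`; by independence the last event has
probability `F̄₁((1-q)x) F̄₂((1-q)x) = o(F̄₂(x))`, and `(F̄₁ + F̄₂)(qx) / (F̄₁ + F̄₂)(x) → q^{-α}`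
because it lies between `F̄₁(qx)/F̄₁(x)` and `F̄₂(qx)/F̄₂(x)`. Letting `q → 1` gives
`P(X₁ + X₂ > x) ∼ F̄₁(x) + F̄₂(x)`, and regular variation passes along this equivalence.
-/

open Asymptotics ProbabilityTheory

lemma min_div_div_le_add_div_add {a b c d : ℝ} (hc : 0 < c) (hd : 0 < d) :
    min (a / c) (b / d) ≤ (a + b) / (c + d) := by
  rw [le_div_iff₀ (add_pos hc hd), mul_add]
  gcongr
  · exact (mul_le_mul_of_nonneg_right (min_le_left _ _) hc.le).trans (div_mul_cancel₀ a hc.ne').le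
  · exact (mul_le_mul_of_nonneg_right (min_le_right _ _) hd.le).trans (div_mul_cancel₀ b hd.ne').le

lemma add_div_add_le_max_div_div {a b c d : ℝ} (hc : 0 < c) (hd : 0 < d) :
    (a + b) / (c + d) ≤ max (a / c) (b / d) := by
  simpa only [neg_div, ← neg_add, min_neg_neg, neg_le_neg_iff] using
    min_div_div_le_add_div_add (a := -a) (b := -b) hc hd

lemma Filter.Tendsto.add_div_add {ι : Type*} {l : Filter ι} {a b c d : ι → ℝ} {L : ℝ}
    (hac : Tendsto (fun i => a i / c i) l (𝓝 L)) (hbd : Tendsto (fun i => b i / d i) l (𝓝 L))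
    (hc : ∀ᶠ i in l, 0 < c i) (hd : ∀ᶠ i in l, 0 < d i) :
    Tendsto (fun i => (a i + b i) / (c i + d i)) l (𝓝 L) := by
  refine tendsto_of_tendsto_of_tendsto_of_le_of_le' (by simpa using hac.min hbd)
    (by simpa using hac.max hbd) ?_ ?_
  · filter_upwards [hc, hd] with i hci hdi using min_div_div_le_add_div_add hci hdi
  · filter_upwards [hc, hd] with i hci hdi using add_div_add_le_max_div_div hci hdi

lemma exists_mem_Ioo_rpow_lt {c : ℝ} (hc : 1 < c) (β : ℝ) : ∃ q ∈ Set.Ioo (0 : ℝ) 1, q ^ β < c := by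
  have hlim : Tendsto (fun p : ℝ => p ^ β) (𝓝[<] 1) (𝓝 1) := by
    simpa using (Real.continuousAt_rpow_const 1 β (Or.inl one_ne_zero)).tendsto.mono_left
      nhdsWithin_le_nhds
  obtain ⟨q, hqc, hq⟩ := ((hlim.eventually_lt_const hc).and (Ioo_mem_nhdsLT zero_lt_one)).exists
  exact ⟨q, hq, hqc⟩

section Tail

variable {Ω : Type*} [MeasurableSpace Ω] {μ : Measure Ω} {X : Ω → ℝ}

lemma tailP_nonneg (x : ℝ) : 0 ≤ tailP μ X x := ENNReal.toReal_nonneg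

variable [IsFiniteMeasure μ]

lemma tailP_pos {x : ℝ} (h : 0 < μ {ω | x < X ω}) : 0 < tailP μ X x :=
  ENNReal.toReal_pos h.ne' (measure_ne_top _ _)

lemma tendsto_tailP_atTop (hX : Measurable X) : Tendsto (tailP μ X) atTop (𝓝 0) := by
  have hlim : Tendsto (fun x : ℝ => μ {ω | x < X ω}) atTop (𝓝 (μ (⋂ x : ℝ, {ω | x < X ω}))) :=
    tendsto_measure_iInter_atTop (fun _ => (hX measurableSet_Ioi).nullMeasurableSet)
      (fun _ _ hab _ hω => hab.trans_lt hω) ⟨0, measure_ne_top _ _⟩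
  have hempty : (⋂ x : ℝ, {ω | x < X ω}) = ∅ :=
    Set.eq_empty_of_forall_notMem fun ω hω =>
      lt_irrefl (X ω) (Set.mem_iInter.1 hω (X ω))
  rw [hempty, measure_empty] at hlim
  rw [← ENNReal.toReal_zero]
  exact (ENNReal.tendsto_toReal ENNReal.zero_ne_top).comp hlim

lemma RegVaryRV.tailP_pos {α x : ℝ} (hX : RegVaryRV μ X α) (hx : 0 < x) : 0 < tailP μ X x :=
  _root_.tailP_pos (hX.1 x hx)

lemma RegVaryRV.tendsto_tailP_add_tailP_ratio {Y : Ω → ℝ} {α q : ℝ} (hX : RegVaryRV μ X α)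
    (hY : RegVaryRV μ Y α) (hq : 0 < q) :
    Tendsto (fun x => (tailP μ X (q * x) + tailP μ Y (q * x)) / (tailP μ X x + tailP μ Y x))
      atTop (𝓝 (q ^ (-α))) :=
  (hX.2 q hq).add_div_add (hY.2 q hq) (eventually_gt_atTop 0 |>.mono fun _ => hX.tailP_pos)
    (eventually_gt_atTop 0 |>.mono fun _ => hY.tailP_pos)

end Tail

namespace ProbabilityTheory.IndepFun

variable {Ω : Type*} [MeasurableSpace Ω] {μ : Measure Ω} {X₁ X₂ : Ω → ℝ}

lemma toReal_measure_tail_inter (hind : IndepFun X₁ X₂ μ) (a b : ℝ) :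
    (μ ({ω | a < X₁ ω} ∩ {ω | b < X₂ ω})).toReal = tailP μ X₁ a * tailP μ X₂ b := by
  have hmul : μ ({ω | a < X₁ ω} ∩ {ω | b < X₂ ω}) = μ {ω | a < X₁ ω} * μ {ω | b < X₂ ω} :=
    hind.measure_inter_preimage_eq_mul _ _ measurableSet_Ioi measurableSet_Ioi
  rw [hmul, ENNReal.toReal_mul]
  rfl

/-- Inclusion–exclusion for `{X₁ > x} ∪ {X₂ > x} ⊆ {X₁ + X₂ > x}`. -/
lemma tailP_add_tailP_sub_mul_le [IsFiniteMeasure μ] (hind : IndepFun X₁ X₂ μ) (h₂ : Measurable X₂)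
    (h₁₀ : ∀ ω, 0 ≤ X₁ ω) (h₂₀ : ∀ ω, 0 ≤ X₂ ω) (x : ℝ) :
    tailP μ X₁ x + tailP μ X₂ x - tailP μ X₁ x * tailP μ X₂ x ≤
      tailP μ (fun ω => X₁ ω + X₂ ω) x := by
  have hunion := measure_union_add_inter (μ := μ) {ω | x < X₁ ω}
    (show MeasurableSet {ω | x < X₂ ω} from h₂ measurableSet_Ioi)
  have hsub : {ω | x < X₁ ω} ∪ {ω | x < X₂ ω} ⊆ {ω | x < X₁ ω + X₂ ω} := by
    rintro ω (h | h)
    · exact h.trans_le (le_add_of_nonneg_right (h₂₀ ω))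
    · exact h.trans_le (le_add_of_nonneg_left (h₁₀ ω))
  have hle := ENNReal.toReal_mono (measure_ne_top μ _) (measure_mono (μ := μ) hsub)
  apply_fun ENNReal.toReal at hunion
  rw [ENNReal.toReal_add (measure_ne_top _ _) (measure_ne_top _ _),
    ENNReal.toReal_add (measure_ne_top _ _) (measure_ne_top _ _),
    hind.toReal_measure_tail_inter] at hunion
  unfold tailP at *
  linarith

lemma tailP_add_le [IsFiniteMeasure μ] (hind : IndepFun X₁ X₂ μ) (a b x : ℝ) :
    tailP μ (fun ω => X₁ ω + X₂ ω) x ≤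
      tailP μ X₁ a + tailP μ X₂ b + tailP μ X₁ (x - b) * tailP μ X₂ (x - a) := by
  have hsub : {ω | x < X₁ ω + X₂ ω} ⊆
      ({ω | a < X₁ ω} ∪ {ω | b < X₂ ω}) ∪ ({ω | x - b < X₁ ω} ∩ {ω | x - a < X₂ ω}) := by
    intro ω (hω : x < X₁ ω + X₂ ω)
    by_cases h₁ : a < X₁ ω
    · exact Or.inl (Or.inl h₁)
    by_cases h₂ : b < X₂ ω
    · exact Or.inl (Or.inr h₂)
    exact Or.inr ⟨show x - b < X₁ ω by linarith, show x - a < X₂ ω by linarith⟩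
  have hle := (measure_mono (μ := μ) hsub).trans
    ((measure_union_le _ _).trans (add_le_add_left (measure_union_le _ _) _))
  rw [← hind.toReal_measure_tail_inter]
  unfold tailP
  rw [← ENNReal.toReal_add (measure_ne_top _ _) (measure_ne_top _ _),
    ← ENNReal.toReal_add (by finiteness) (measure_ne_top _ _)]
  exact ENNReal.toReal_mono (by finiteness) hle

end ProbabilityTheory.IndepFun

section SumOfIndependent

variable {Ω : Type*} [MeasurableSpace Ω] {μ : Measure Ω} [IsFiniteMeasure μ] {X₁ X₂ : Ω → ℝ}

lemma one_sub_tailP_le_tailP_add_div (hind : IndepFun X₁ X₂ μ) (h₂ : Measurable X₂)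
    (h₁₀ : ∀ ω, 0 ≤ X₁ ω) (h₂₀ : ∀ ω, 0 ≤ X₂ ω) {x : ℝ}
    (hx : 0 < tailP μ X₁ x + tailP μ X₂ x) :
    1 - tailP μ X₂ x ≤ tailP μ (fun ω => X₁ ω + X₂ ω) x / (tailP μ X₁ x + tailP μ X₂ x) := by
  rw [le_div_iff₀ hx]
  nlinarith [hind.tailP_add_tailP_sub_mul_le h₂ h₁₀ h₂₀ x, sq_nonneg (tailP μ X₂ x)]

lemma tailP_add_div_le (hind : IndepFun X₁ X₂ μ) {q x : ℝ} (hx₁ : 0 < tailP μ X₁ x)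
    (hx₂ : 0 < tailP μ X₂ x) :
    tailP μ (fun ω => X₁ ω + X₂ ω) x / (tailP μ X₁ x + tailP μ X₂ x) ≤
      (tailP μ X₁ (q * x) + tailP μ X₂ (q * x)) / (tailP μ X₁ x + tailP μ X₂ x) +
        tailP μ X₁ ((1 - q) * x) * (tailP μ X₂ ((1 - q) * x) / tailP μ X₂ x) := by
  have h := hind.tailP_add_le (q * x) (q * x) x
  rw [show x - q * x = (1 - q) * x by ring] at h
  set f₁ := tailP μ X₁
  set f₂ := tailP μ X₂
  calc _ ≤ (f₁ (q * x) + f₂ (q * x) + f₁ ((1 - q) * x) * f₂ ((1 - q) * x)) / (f₁ x + f₂ x) :=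
        div_le_div_of_nonneg_right h (add_pos hx₁ hx₂).le
    _ = (f₁ (q * x) + f₂ (q * x)) / (f₁ x + f₂ x) +
          f₁ ((1 - q) * x) * (f₂ ((1 - q) * x) / (f₁ x + f₂ x)) := by
        rw [add_div, mul_div_assoc]
    _ ≤ _ := by
        gcongr
        · exact tailP_nonneg _
        · exact tailP_nonneg _
        · exact le_add_of_nonneg_left (tailP_nonneg _)

lemma RegVaryRV.tendsto_tailP_add_div {α : ℝ} (hX₁ : RegVaryRV μ X₁ α) (hX₂ : RegVaryRV μ X₂ α)
    (hind : IndepFun X₁ X₂ μ) (h₁ : Measurable X₁) (h₂ : Measurable X₂)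
    (h₁₀ : ∀ ω, 0 ≤ X₁ ω) (h₂₀ : ∀ ω, 0 ≤ X₂ ω) :
    Tendsto (fun x => tailP μ (fun ω => X₁ ω + X₂ ω) x / (tailP μ X₁ x + tailP μ X₂ x))
      atTop (𝓝 1) := by
  have hpos : ∀ᶠ x in atTop, 0 < tailP μ X₁ x ∧ 0 < tailP μ X₂ x :=
    (eventually_gt_atTop 0).mono fun x hx => ⟨hX₁.tailP_pos hx, hX₂.tailP_pos hx⟩
  refine tendsto_order.2 ⟨fun c hc => ?_, fun c hc => ?_⟩
  · have hlower : Tendsto (fun x => 1 - tailP μ X₂ x) atTop (𝓝 1) := by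
      simpa using (tendsto_tailP_atTop h₂).const_sub 1
    filter_upwards [hlower.eventually_const_lt hc, hpos] with x hcx hx
    exact hcx.trans_le (one_sub_tailP_le_tailP_add_div hind h₂ h₁₀ h₂₀ (add_pos hx.1 hx.2))
  · obtain ⟨q, ⟨hq₀, hq₁⟩, hqc⟩ := exists_mem_Ioo_rpow_lt hc (-α)
    have hq₁' : 0 < 1 - q := sub_pos.2 hq₁
    have hupper : Tendsto (fun x =>
        (tailP μ X₁ (q * x) + tailP μ X₂ (q * x)) / (tailP μ X₁ x + tailP μ X₂ x) +
          tailP μ X₁ ((1 - q) * x) * (tailP μ X₂ ((1 - q) * x) / tailP μ X₂ x))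
        atTop (𝓝 (q ^ (-α) + 0 * (1 - q) ^ (-α))) :=
      (hX₁.tendsto_tailP_add_tailP_ratio hX₂ hq₀).add
        (((tendsto_tailP_atTop h₁).comp (tendsto_id.const_mul_atTop hq₁')).mul (hX₂.2 _ hq₁'))
    rw [zero_mul, add_zero] at hupper
    filter_upwards [hupper.eventually_lt_const hqc, hpos] with x hcx hx
    exact (tailP_add_div_le hind hx.1 hx.2).trans_lt hcx

end SumOfIndependent

theorem stmt8_general {Ω : Type*} [MeasurableSpace Ω] (μ : Measure Ω) [IsProbabilityMeasure μ]
    (X₁ X₂ : Ω → ℝ) (h1m : Measurable X₁) (h2m : Measurable X₂)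
    (h10 : ∀ ω, 0 ≤ X₁ ω) (h20 : ∀ ω, 0 ≤ X₂ ω)
    (hind : ProbabilityTheory.IndepFun X₁ X₂ μ)
    (α : ℝ) (hX₁ : RegVaryRV μ X₁ α) (hX₂ : RegVaryRV μ X₂ α) :
    Tendsto (fun x : ℝ =>
        tailP μ (fun ω => X₁ ω + X₂ ω) x / (tailP μ X₁ x + tailP μ X₂ x)) atTop (𝓝 1) ∧
    RegVaryRV μ (fun ω => X₁ ω + X₂ ω) α := by
  have hsum := hX₁.tendsto_tailP_add_div hX₂ hind h1m h2m h10 h20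
  have hequiv : tailP μ (fun ω => X₁ ω + X₂ ω) ~[atTop] fun x => tailP μ X₁ x + tailP μ X₂ x :=
    isEquivalent_of_tendsto_one hsum
  refine ⟨hsum, fun x hx => (hX₁.1 x hx).trans_le (measure_mono fun ω (hω : x < X₁ ω) =>
    hω.trans_le (le_add_of_nonneg_right (h20 ω))), fun q hq => ?_⟩
  exact ((hequiv.comp_tendsto (tendsto_id.const_mul_atTop hq)).div hequiv).tendsto_nhds_iff.2
    (hX₁.tendsto_tailP_add_tailP_ratio hX₂ hq)

theorem stmt8 {Ω : Type*} [MeasurableSpace Ω] (μ : Measure Ω) [IsProbabilityMeasure μ]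
    (X₁ X₂ : Ω → ℝ) (h1m : Measurable X₁) (h2m : Measurable X₂)
    (h10 : ∀ ω, 0 ≤ X₁ ω) (h20 : ∀ ω, 0 ≤ X₂ ω)
    (hind : ProbabilityTheory.IndepFun X₁ X₂ μ)
    (α : ℝ) (hα : 0 ≤ α) (hX₁ : RegVaryRV μ X₁ α) (hX₂ : RegVaryRV μ X₂ α) :
    Tendsto (fun x : ℝ =>
        tailP μ (fun ω => X₁ ω + X₂ ω) x / (tailP μ X₁ x + tailP μ X₂ x)) atTop (𝓝 1) ∧
    RegVaryRV μ (fun ω => X₁ ω + X₂ ω) α :=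
  stmt8_general μ X₁ X₂ h1m h2m h10 h20 hind α hX₁ hX₂
end

section
/- Let h : [0,∞) → (0,∞) be a function with lim_{x→∞} h(x) = 0. Then there exists a monotone increasing, left-continuous function L : [0,∞) → [1,∞) that is slowly varying at infinity, with lim_{x→∞} L(x) = ∞ and lim_{x→∞} L(x) h(x) = 0. -/
/-!
Replace `h` by the nonincreasing majorant `H x = sup_{t ≥ x} min (h t) 1` and put `M = H ^ (-1/2)`:
then `M` is nondecreasing, `M → ∞` and `M h ≤ √H → 0`. It remains to flatten `M` into a slowly
varying function below it. With a slowly varying, nondecreasing, continuous `S → ∞` (here `log`,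
clamped at `e`), take `L x = S x * inf_{t ∈ [0, x]} M t / S t`. Then `L ≤ M`, `L` is nondecreasing
and `L / S` is nonincreasing, so `1 ≤ L (q x) / L x ≤ S (q x) / S x` for `q ≥ 1`. Left continuity
of `L` comes from that of `S` and the monotonicity of `M`, and `L → ∞` because `S` and `M` do.
-/

open Filter Topology Set

def SlowlyVarying (L : ℝ → ℝ) : Prop :=
  ∀ q > 0, Tendsto (fun x => L (q * x) / L x) atTop (𝓝 1)

namespace SlowlyVarying

variable {L S : ℝ → ℝ}

theorem of_one_le (hL : ∀ q ≥ 1, Tendsto (fun x => L (q * x) / L x) atTop (𝓝 1)) :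
    SlowlyVarying L := by
  intro q hq
  rcases le_total 1 q with hq1 | hq1
  · exact hL q hq1
  · -- `L (q * x) / L x` is the reciprocal of the ratio for `q⁻¹ ≥ 1` at the point `q * x`
    have hinv := ((hL q⁻¹ ((one_le_inv₀ hq).2 hq1)).inv₀ one_ne_zero).comp
      (tendsto_id.const_mul_atTop hq)
    rw [inv_one] at hinv
    refine hinv.congr fun x => ?_
    simp only [Function.comp_apply, id, inv_mul_cancel_left₀ hq.ne', inv_div]

theorem of_antitoneOn_div (hS : SlowlyVarying S) (hSpos : ∀ x ≥ 0, 0 < S x)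
    (hLpos : ∀ x ≥ 0, 0 < L x) (hL : MonotoneOn L (Ici 0))
    (hLS : AntitoneOn (fun x => L x / S x) (Ici 0)) : SlowlyVarying L := by
  refine of_one_le fun q hq => tendsto_of_tendsto_of_tendsto_of_le_of_le' tendsto_const_nhds
    (hS q (by linarith)) ?_ ?_
  all_goals
    filter_upwards [eventually_ge_atTop 0] with x hx
    have hqx : x ≤ q * x := le_mul_of_one_le_left hx hq
  · exact (one_le_div (hLpos x hx)).2 (hL hx (hx.trans hqx) hqx)
  · have hdiv : L (q * x) / S (q * x) ≤ L x / S x := hLS hx (hx.trans hqx) hqx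
    rw [div_le_div_iff₀ (hSpos _ (hx.trans hqx)) (hSpos x hx)] at hdiv
    rw [div_le_div_iff₀ (hLpos x hx) (hSpos x hx)]
    linarith

end SlowlyVarying

noncomputable def clampedLog (x : ℝ) : ℝ := Real.log (max x (Real.exp 1))

theorem one_le_clampedLog (x : ℝ) : 1 ≤ clampedLog x :=
  (Real.le_log_iff_exp_le (by positivity)).2 (le_max_right _ _)

theorem monotone_clampedLog : Monotone clampedLog := fun _ _ hxy =>
  Real.log_le_log (by positivity) (max_le_max_right _ hxy)

theorem continuous_clampedLog : Continuous clampedLog :=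
  Real.continuousOn_log.comp_continuous (continuous_id.max continuous_const)
    fun _ => (lt_max_of_lt_right (Real.exp_pos 1)).ne'

theorem tendsto_clampedLog_atTop : Tendsto clampedLog atTop atTop :=
  Real.tendsto_log_atTop.comp (tendsto_atTop_mono (fun _ => le_max_left _ _) tendsto_id)

theorem slowlyVarying_clampedLog : SlowlyVarying clampedLog := by
  intro q hq
  have hlim : Tendsto (fun x => 1 + Real.log q * (Real.log x)⁻¹) atTop (𝓝 1) := by
    simpa using (Real.tendsto_log_atTop.inv_tendsto_atTop.const_mul (Real.log q)).const_add 1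
  refine hlim.congr' ?_
  filter_upwards [eventually_ge_atTop (Real.exp 1), eventually_ge_atTop (Real.exp 1 / q)]
    with x hx hxq
  have hqx : Real.exp 1 ≤ q * x := by rwa [div_le_iff₀' hq] at hxq
  have hx0 : 0 < x := (Real.exp_pos 1).trans_le hx
  have hlogx : 1 ≤ Real.log x := (Real.le_log_iff_exp_le hx0).2 hx
  rw [clampedLog, clampedLog, max_eq_left hx, max_eq_left hqx,
    Real.log_mul hq.ne' hx0.ne']
  field_simp
  ring

noncomputable def runningInf (g : ℝ → ℝ) (x : ℝ) : ℝ := sInf (g '' Icc 0 x)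

section runningInf

variable {g : ℝ → ℝ} {c x t : ℝ}

theorem runningInf_le (hg : BddBelow (g '' Ici 0)) (ht : t ∈ Icc 0 x) : runningInf g x ≤ g t :=
  csInf_le (hg.mono (image_mono Icc_subset_Ici_self)) (mem_image_of_mem g ht)

theorem le_runningInf (hx : 0 ≤ x) (hc : ∀ t ∈ Icc 0 x, c ≤ g t) : c ≤ runningInf g x :=
  le_csInf ((nonempty_Icc.2 hx).image g) (forall_mem_image.2 hc)

theorem antitoneOn_runningInf (hg : BddBelow (g '' Ici 0)) : AntitoneOn (runningInf g) (Ici 0) :=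
  fun _ hx _ _ hxy => le_runningInf hx fun _ ht => runningInf_le hg ⟨ht.1, ht.2.trans hxy⟩

theorem continuousWithinAt_runningInf (hg : BddBelow (g '' Ici 0)) (hx : 0 < x)
    (hgx : UpperSemicontinuousWithinAt g (Iio x) x) :
    ContinuousWithinAt (runningInf g) (Iio x) x := by
  have hanti := antitoneOn_runningInf hg
  refine tendsto_order.2 ⟨fun a ha => ?_, fun b hb => ?_⟩
  · filter_upwards [Ioo_mem_nhdsLT hx] with y hy
    exact ha.trans_le (hanti hy.1.le hx.le hy.2.le)
  · obtain ⟨y₀, hy₀, hy₀b⟩ : ∃ y₀ ∈ Ico 0 x, runningInf g y₀ < b := by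
      obtain ⟨_, ⟨t, ht, rfl⟩, htb⟩ := exists_lt_of_csInf_lt ((nonempty_Icc.2 hx.le).image g) hb
      rcases ht.2.lt_or_eq with htx | rfl
      · exact ⟨t, ⟨ht.1, htx⟩, (runningInf_le hg ⟨ht.1, le_rfl⟩).trans_lt htb⟩
      · obtain ⟨y, hyb, hy⟩ := ((hgx b htb).and (Ioo_mem_nhdsLT hx)).exists
        exact ⟨y, ⟨hy.1.le, hy.2⟩, (runningInf_le hg ⟨hy.1.le, le_rfl⟩).trans_lt hyb⟩
    filter_upwards [Ioo_mem_nhdsLT hy₀.2] with y hy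
    exact (hanti hy₀.1 (hy₀.1.trans hy.1.le) hy.1.le).trans_lt hy₀b

end runningInf

/-- The largest function below `M` on `[0, ∞)` whose ratio to `S` is nonincreasing there. -/
noncomputable def envelope (S M : ℝ → ℝ) (x : ℝ) : ℝ := S x * runningInf (fun t => M t / S t) x

section envelope

variable {S M : ℝ → ℝ} {x : ℝ}

theorem bddBelow_div_image (hSpos : ∀ x ≥ 0, 0 < S x) (hM0 : ∀ x ≥ 0, 0 ≤ M x) :
    BddBelow ((fun t => M t / S t) '' Ici 0) :=
  ⟨0, forall_mem_image.2 fun t ht => div_nonneg (hM0 t ht) (hSpos t ht).le⟩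

theorem envelope_le (hSpos : ∀ x ≥ 0, 0 < S x) (hM0 : ∀ x ≥ 0, 0 ≤ M x) (hx : 0 ≤ x) :
    envelope S M x ≤ M x :=
  (le_div_iff₀' (hSpos x hx)).1 (runningInf_le (bddBelow_div_image hSpos hM0) ⟨hx, le_rfl⟩)

theorem min_le_envelope (hSpos : ∀ x ≥ 0, 0 < S x) (hS : MonotoneOn S (Ici 0))
    (hM : MonotoneOn M (Ici 0)) (hM0 : ∀ x ≥ 0, 0 ≤ M x) {T : ℝ} (hT : 0 ≤ T) (hTx : T ≤ x) :
    min (S x * runningInf (fun t => M t / S t) T) (M T) ≤ envelope S M x := by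
  have hx : 0 ≤ x := hT.trans hTx
  have hSx := hSpos x hx
  rw [envelope, ← div_le_iff₀' hSx]
  refine le_runningInf hx fun t ht => ?_
  rcases le_total t T with htT | hTt
  · calc min (S x * runningInf (fun t => M t / S t) T) (M T) / S x
        ≤ S x * runningInf (fun t => M t / S t) T / S x := by gcongr; exact min_le_left _ _
      _ = runningInf (fun t => M t / S t) T := mul_div_cancel_left₀ _ hSx.ne'
      _ ≤ M t / S t := runningInf_le (bddBelow_div_image hSpos hM0) ⟨ht.1, htT⟩
  · calc min (S x * runningInf (fun t => M t / S t) T) (M T) / S x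
        ≤ M t / S x := by gcongr; exact (min_le_right _ _).trans (hM hT ht.1 hTt)
      _ ≤ M t / S t := div_le_div_of_nonneg_left (hM0 t ht.1) (hSpos t ht.1) (hS ht.1 hx ht.2)

theorem monotoneOn_envelope (hSpos : ∀ x ≥ 0, 0 < S x) (hS : MonotoneOn S (Ici 0))
    (hM : MonotoneOn M (Ici 0)) (hM0 : ∀ x ≥ 0, 0 ≤ M x) : MonotoneOn (envelope S M) (Ici 0) := by
  intro x hx y hy hxy
  have hinf : 0 ≤ runningInf (fun t => M t / S t) x :=
    le_runningInf hx fun t ht => div_nonneg (hM0 t ht.1) (hSpos t ht.1).le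
  refine le_trans (le_min ?_ (envelope_le hSpos hM0 hx)) (min_le_envelope hSpos hS hM hM0 hx hxy)
  exact mul_le_mul_of_nonneg_right (hS hx hy hxy) hinf

theorem one_le_envelope (hSpos : ∀ x ≥ 0, 0 < S x) (hS : MonotoneOn S (Ici 0))
    (hM1 : ∀ x ≥ 0, 1 ≤ M x) (hx : 0 ≤ x) : 1 ≤ envelope S M x := by
  rw [envelope, ← div_le_iff₀' (hSpos x hx)]
  refine le_runningInf hx fun t ht => ?_
  calc 1 / S x ≤ 1 / S t := one_div_le_one_div_of_le (hSpos t ht.1) (hS ht.1 hx ht.2)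
    _ ≤ M t / S t := div_le_div_of_nonneg_right (hM1 t ht.1) (hSpos t ht.1).le

theorem tendsto_envelope_atTop (hSpos : ∀ x ≥ 0, 0 < S x) (hS : MonotoneOn S (Ici 0))
    (hM : MonotoneOn M (Ici 0)) (hM1 : ∀ x ≥ 0, 1 ≤ M x) (hStop : Tendsto S atTop atTop)
    (hMtop : Tendsto M atTop atTop) : Tendsto (envelope S M) atTop atTop := by
  have hM0 : ∀ x ≥ 0, 0 ≤ M x := fun x hx => zero_le_one.trans (hM1 x hx)
  refine tendsto_atTop.2 fun C => ?_
  obtain ⟨T, hMT, hT⟩ := ((hMtop.eventually_ge_atTop C).and (eventually_ge_atTop 0)).exists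
  have hinf : 0 < runningInf (fun t => M t / S t) T :=
    pos_of_mul_pos_right (one_pos.trans_le (one_le_envelope hSpos hS hM1 hT)) (hSpos T hT).le
  filter_upwards [(hStop.atTop_mul_const hinf).eventually_ge_atTop C, eventually_ge_atTop T]
    with x hSx hTx
  exact (le_min hSx hMT).trans (min_le_envelope hSpos hS hM hM0 hT hTx)

theorem antitoneOn_envelope_div (hSpos : ∀ x ≥ 0, 0 < S x) (hM0 : ∀ x ≥ 0, 0 ≤ M x) :
    AntitoneOn (fun x => envelope S M x / S x) (Ici 0) := by
  intro x hx y hy hxy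
  simp only [envelope, mul_div_cancel_left₀ _ (hSpos _ hx).ne', mul_div_cancel_left₀ _ (hSpos _ hy).ne']
  exact antitoneOn_runningInf (bddBelow_div_image hSpos hM0) hx hy hxy

theorem upperSemicontinuousWithinAt_div (hSpos : ∀ x ≥ 0, 0 < S x) (hM : MonotoneOn M (Ici 0))
    (hx : 0 < x) (hSx : ContinuousWithinAt S (Iio x) x) :
    UpperSemicontinuousWithinAt (fun t => M t / S t) (Iio x) x := by
  intro b hb
  have hcont : ContinuousWithinAt (fun t => M x / S t) (Iio x) x :=
    continuousWithinAt_const.div hSx (hSpos x hx.le).ne'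
  filter_upwards [hcont.eventually_lt_const hb, Ioo_mem_nhdsLT hx] with y hyb hy
  exact (div_le_div_of_nonneg_right (hM hy.1.le hx.le hy.2.le) (hSpos y hy.1.le).le).trans_lt hyb

theorem continuousWithinAt_envelope (hSpos : ∀ x ≥ 0, 0 < S x) (hM : MonotoneOn M (Ici 0))
    (hM0 : ∀ x ≥ 0, 0 ≤ M x) (hx : 0 < x) (hSx : ContinuousWithinAt S (Iio x) x) :
    ContinuousWithinAt (envelope S M) (Iio x) x :=
  hSx.mul (continuousWithinAt_runningInf (bddBelow_div_image hSpos hM0) hx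
    (upperSemicontinuousWithinAt_div hSpos hM hx hSx))

theorem slowlyVarying_envelope (hSpos : ∀ x ≥ 0, 0 < S x) (hS : MonotoneOn S (Ici 0))
    (hSsv : SlowlyVarying S) (hM : MonotoneOn M (Ici 0)) (hM1 : ∀ x ≥ 0, 1 ≤ M x) :
    SlowlyVarying (envelope S M) :=
  have hM0 : ∀ x ≥ 0, 0 ≤ M x := fun x hx => zero_le_one.trans (hM1 x hx)
  hSsv.of_antitoneOn_div hSpos (fun _ hx => one_pos.trans_le (one_le_envelope hSpos hS hM1 hx))
    (monotoneOn_envelope hSpos hS hM hM0) (antitoneOn_envelope_div hSpos hM0)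

end envelope

theorem exists_slowlyVarying_le {M : ℝ → ℝ} (hM : MonotoneOn M (Ici 0))
    (hM1 : ∀ x ≥ 0, 1 ≤ M x) (hMtop : Tendsto M atTop atTop) :
    ∃ L : ℝ → ℝ, MonotoneOn L (Ici 0) ∧ (∀ x > 0, ContinuousWithinAt L (Iio x) x) ∧
      (∀ x ≥ 0, 1 ≤ L x) ∧ SlowlyVarying L ∧ Tendsto L atTop atTop ∧ ∀ x ≥ 0, L x ≤ M x := by
  have hSpos : ∀ x ≥ 0, 0 < clampedLog x := fun x _ => one_pos.trans_le (one_le_clampedLog x)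
  have hS := monotone_clampedLog.monotoneOn (Ici 0)
  have hM0 : ∀ x ≥ 0, 0 ≤ M x := fun x hx => zero_le_one.trans (hM1 x hx)
  exact ⟨envelope clampedLog M, monotoneOn_envelope hSpos hS hM hM0,
    fun x hx => continuousWithinAt_envelope hSpos hM hM0 hx continuous_clampedLog.continuousWithinAt,
    fun x hx => one_le_envelope hSpos hS hM1 hx,
    slowlyVarying_envelope hSpos hS slowlyVarying_clampedLog hM hM1,
    tendsto_envelope_atTop hSpos hS hM hM1 tendsto_clampedLog_atTop hMtop,
    fun x hx => envelope_le hSpos hM0 hx⟩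

noncomputable def tailSup (g : ℝ → ℝ) (x : ℝ) : ℝ := sSup (g '' Ici x)

section tailSup

variable {g : ℝ → ℝ} {c l x t : ℝ}

theorem le_tailSup (hg : BddAbove (range g)) (ht : x ≤ t) : g t ≤ tailSup g x :=
  le_csSup (hg.mono (image_subset_range _ _)) (mem_image_of_mem g ht)

theorem tailSup_le (hc : ∀ t ≥ x, g t ≤ c) : tailSup g x ≤ c :=
  csSup_le (nonempty_Ici.image g) (forall_mem_image.2 hc)

theorem antitone_tailSup (hg : BddAbove (range g)) : Antitone (tailSup g) :=
  fun _ _ hxy => tailSup_le fun _ ht => le_tailSup hg (hxy.trans ht)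

theorem tendsto_tailSup (hg : BddAbove (range g)) (hlim : Tendsto g atTop (𝓝 l)) :
    Tendsto (tailSup g) atTop (𝓝 l) := by
  refine tendsto_order.2 ⟨fun a ha => ?_, fun b hb => ?_⟩
  · filter_upwards [hlim.eventually_const_lt ha] with x hx
    exact hx.trans_le (le_tailSup hg le_rfl)
  · obtain ⟨c, hlc, hcb⟩ := exists_between hb
    obtain ⟨N, hN⟩ := eventually_atTop.1 (hlim.eventually_lt_const hlc)
    filter_upwards [eventually_ge_atTop N] with x hx
    exact (tailSup_le fun t ht => (hN t (hx.trans ht)).le).trans_lt hcb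

end tailSup

theorem exists_majorant_mul_tendsto_zero {h : ℝ → ℝ} (hpos : ∀ x ≥ 0, 0 < h x)
    (hlim : Tendsto h atTop (𝓝 0)) :
    ∃ M : ℝ → ℝ, MonotoneOn M (Ici 0) ∧ (∀ x ≥ 0, 1 ≤ M x) ∧ Tendsto M atTop atTop ∧
      Tendsto (fun x => M x * h x) atTop (𝓝 0) := by
  set g : ℝ → ℝ := fun t => min (h t) 1
  have hg : BddAbove (range g) := ⟨1, forall_mem_range.2 fun t => min_le_right _ _⟩
  have hHlim : Tendsto (tailSup g) atTop (𝓝 0) :=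
    tendsto_tailSup hg (by simpa using hlim.min (tendsto_const_nhds (x := (1 : ℝ))))
  have hHpos : ∀ x ≥ 0, 0 < √(tailSup g x) := fun x hx =>
    Real.sqrt_pos.2 ((lt_min (hpos x hx) one_pos).trans_le (le_tailSup hg le_rfl))
  have hsqrt : Tendsto (fun x => √(tailSup g x)) atTop (𝓝 0) := by simpa using hHlim.sqrt
  refine ⟨fun x => (√(tailSup g x))⁻¹, fun x hx y hy hxy => ?_, fun x hx => ?_, ?_, ?_⟩
  · exact inv_anti₀ (hHpos y hy) (Real.sqrt_le_sqrt (antitone_tailSup hg hxy))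
  · exact (one_le_inv₀ (hHpos x hx)).2
      (Real.sqrt_le_one.2 (tailSup_le fun t _ => min_le_right _ _))
  · refine Tendsto.inv_tendsto_nhdsGT_zero (tendsto_nhdsWithin_iff.2 ⟨hsqrt, ?_⟩)
    filter_upwards [eventually_ge_atTop 0] with x hx using hHpos x hx
  · refine squeeze_zero' ?_ ?_ hsqrt
    · filter_upwards [eventually_ge_atTop 0] with x hx
      exact mul_nonneg (inv_nonneg.2 (Real.sqrt_nonneg _)) (hpos x hx).le
    · filter_upwards [hlim.eventually_le_const one_pos, eventually_ge_atTop 0] with x hx1 hx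
      have hhH : h x ≤ tailSup g x := (min_eq_left hx1).symm.trans_le (le_tailSup hg le_rfl)
      calc (√(tailSup g x))⁻¹ * h x ≤ (√(tailSup g x))⁻¹ * tailSup g x := by gcongr
        _ = √(tailSup g x) := by rw [inv_mul_eq_div, Real.div_sqrt]

theorem stmt12 (h : ℝ → ℝ) (hpos : ∀ x ≥ 0, 0 < h x) (hlim : Tendsto h atTop (𝓝 0)) :
    ∃ L : ℝ → ℝ,
      MonotoneOn L (Ici 0) ∧
      (∀ x > 0, ContinuousWithinAt L (Iio x) x) ∧
      (∀ x ≥ 0, 1 ≤ L x) ∧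
      (∀ q > 0, Tendsto (fun x : ℝ => L (q * x) / L x) atTop (𝓝 1)) ∧
      Tendsto L atTop atTop ∧
      Tendsto (fun x => L x * h x) atTop (𝓝 0) := by
  obtain ⟨M, hM, hM1, hMtop, hMh⟩ := exists_majorant_mul_tendsto_zero hpos hlim
  obtain ⟨L, hL, hLcont, hL1, hLsv, hLtop, hLM⟩ := exists_slowlyVarying_le hM hM1 hMtop
  refine ⟨L, hL, hLcont, hL1, hLsv, hLtop, squeeze_zero' ?_ ?_ hMh⟩
  all_goals filter_upwards [eventually_ge_atTop 0] with x hx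
  · exact mul_nonneg (zero_le_one.trans (hL1 x hx)) (hpos x hx).le
  · exact mul_le_mul_of_nonneg_right (hLM x hx) (hpos x hx).le
end

section
/- Let U : (0,∞) → (0,∞) be regularly varying at infinity with index -α. Then for every δ > 0 there exists x₀ ≥ 0 such that for all x ≥ x₀ and all q ≥ 1, (1-δ) q^{-α-δ} < U(qx)/U(x) < (1+δ) q^{-α+δ}. -/
open Filter Topology MeasureTheory Pointwise

/-- Uniform convergence theorem for additively-written slowly varying functions. -/
private lemma uc_lemma (g : ℝ → ℝ) (hgm : Measurable g)
    (hg : ∀ s : ℝ, Tendsto (fun t => g (t + s) - g t) atTop (𝓝 0))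
    (ε : ℝ) (hε : 0 < ε) :
    ∃ T : ℝ, ∀ t ≥ T, ∀ s ∈ Set.Icc (0:ℝ) 1, |g (t + s) - g t| ≤ ε := by
  by_contra hcon
  push_neg at hcon
  choose t ht s hs hlt using fun n : ℕ => hcon n
  -- sets where the increment from `t m` is small
  set S : ℕ → Set ℝ := fun m =>
    Set.Icc (0:ℝ) 3 ∩ {u | |g (t m + u) - g (t m)| ≤ ε/2} with hS
  set S' : ℕ → Set ℝ := fun m =>
    Set.Icc (0:ℝ) 2 ∩ {u | |g (t m + s m + u) - g (t m + s m)| ≤ ε/2} with hS'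
  set A : ℕ → Set ℝ := fun n => ⋂ m, ⋂ (_ : n ≤ m), S m with hA
  set B : ℕ → Set ℝ := fun n => ⋂ m, ⋂ (_ : n ≤ m), S' m with hB
  have hmeas : ∀ (c : ℝ), MeasurableSet {u : ℝ | |g (c + u) - g c| ≤ ε/2} := by
    intro c
    exact measurableSet_le ((hgm.comp (measurable_const.add measurable_id)).sub
      measurable_const).abs measurable_const
  have hSmeas : ∀ m, MeasurableSet (S m) := fun m => measurableSet_Icc.inter (hmeas _)
  have hS'meas : ∀ m, MeasurableSet (S' m) := fun m => measurableSet_Icc.inter (hmeas _)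
  have hAmeas : ∀ n, MeasurableSet (A n) := fun n =>
    MeasurableSet.iInter fun m => MeasurableSet.iInter fun _ => hSmeas m
  have hBmeas : ∀ n, MeasurableSet (B n) := fun n =>
    MeasurableSet.iInter fun m => MeasurableSet.iInter fun _ => hS'meas m
  have hAmono : Monotone A := by
    intro a b hab u hu
    simp only [hA, Set.mem_iInter] at hu ⊢
    intro m hm; exact hu m (hab.trans hm)
  have hBmono : Monotone B := by
    intro a b hab u hu
    simp only [hB, Set.mem_iInter] at hu ⊢
    intro m hm; exact hu m (hab.trans hm)
  have htn : ∀ n : ℕ, (n : ℝ) ≤ t n := ht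
  have hsn : ∀ n : ℕ, s n ∈ Set.Icc (0:ℝ) 1 := hs
  -- the union of the A n's is all of Icc 0 3
  have hAunion : (⋃ n, A n) = Set.Icc (0:ℝ) 3 := by
    apply Set.Subset.antisymm
    · refine Set.iUnion_subset fun n u hu => ?_
      simp only [hA, Set.mem_iInter] at hu
      exact (hu n le_rfl).1
    · intro u hu
      have habs : Tendsto (fun x => |g (x + u) - g x|) atTop (𝓝 0) := by
        simpa using (hg u).abs
      have hev : ∀ᶠ x in atTop, |g (x + u) - g x| ≤ ε/2 :=
        habs.eventually_le_const (by linarith)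
      obtain ⟨T, hT⟩ := (eventually_atTop).mp hev
      refine Set.mem_iUnion.mpr ⟨⌈T⌉₊, ?_⟩
      simp only [hA, Set.mem_iInter]
      intro m hm
      refine ⟨hu, hT (t m) ?_⟩
      calc T ≤ (⌈T⌉₊ : ℝ) := Nat.le_ceil T
        _ ≤ (m : ℝ) := by exact_mod_cast hm
        _ ≤ t m := htn m
  have hBunion : (⋃ n, B n) = Set.Icc (0:ℝ) 2 := by
    apply Set.Subset.antisymm
    · refine Set.iUnion_subset fun n u hu => ?_
      simp only [hB, Set.mem_iInter] at hu
      exact (hu n le_rfl).1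
    · intro u hu
      have habs : Tendsto (fun x => |g (x + u) - g x|) atTop (𝓝 0) := by
        simpa using (hg u).abs
      have hev : ∀ᶠ x in atTop, |g (x + u) - g x| ≤ ε/2 :=
        habs.eventually_le_const (by linarith)
      obtain ⟨T, hT⟩ := (eventually_atTop).mp hev
      refine Set.mem_iUnion.mpr ⟨⌈T⌉₊, ?_⟩
      simp only [hB, Set.mem_iInter]
      intro m hm
      refine ⟨hu, hT (t m + s m) ?_⟩
      calc T ≤ (⌈T⌉₊ : ℝ) := Nat.le_ceil T
        _ ≤ (m : ℝ) := by exact_mod_cast hm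
        _ ≤ t m := htn m
        _ ≤ t m + s m := by have := (hsn m).1; linarith
  -- measures tend to the measure of the union
  have hAvol : Tendsto (volume ∘ A) atTop (𝓝 (ENNReal.ofReal 3)) := by
    have := tendsto_measure_iUnion_atTop (μ := volume) hAmono
    rwa [hAunion, Real.volume_Icc, show (3:ℝ) - 0 = 3 by norm_num] at this
  have hBvol : Tendsto (volume ∘ B) atTop (𝓝 (ENNReal.ofReal 2)) := by
    have := tendsto_measure_iUnion_atTop (μ := volume) hBmono
    rwa [hBunion, Real.volume_Icc, show (2:ℝ) - 0 = 2 by norm_num] at this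
  have hAev : ∀ᶠ n in atTop, ENNReal.ofReal (5/2) < volume (A n) :=
    hAvol.eventually (eventually_gt_nhds (by
      rw [ENNReal.ofReal_lt_ofReal_iff] <;> norm_num))
  have hBev : ∀ᶠ n in atTop, ENNReal.ofReal (3/2) < volume (B n) :=
    hBvol.eventually (eventually_gt_nhds (by
      rw [ENNReal.ofReal_lt_ofReal_iff] <;> norm_num))
  obtain ⟨N, hNA, hNB⟩ := (hAev.and hBev).exists
  -- the shifted set
  set C : Set ℝ := s N +ᵥ B N with hC
  have hCvol : volume C = volume (B N) := MeasureTheory.measure_vadd (μ := volume) _ _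
  have hCsub : C ⊆ Set.Icc (0:ℝ) 3 := by
    rintro u hu
    rw [hC, Set.mem_vadd_set] at hu
    obtain ⟨b, hb, rfl⟩ := hu
    have hb2 : b ∈ Set.Icc (0:ℝ) 2 := by
      have : b ∈ S' N := by
        simp only [hB, Set.mem_iInter] at hb; exact hb N le_rfl
      exact this.1
    have h1 := (hsn N).1; have h2 := (hsn N).2
    constructor
    · simp only [vadd_eq_add]; have := hb2.1; linarith
    · simp only [vadd_eq_add]; have := hb2.2; linarith
  -- A N and C intersect
  have hinter : (A N ∩ C).Nonempty := by
    by_contra hempty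
    rw [Set.not_nonempty_iff_eq_empty] at hempty
    have hdisj : Disjoint C (A N) := by
      rw [Set.disjoint_iff_inter_eq_empty, Set.inter_comm]; exact hempty
    have hun : volume (C ∪ A N) = volume C + volume (A N) :=
      measure_union hdisj (hAmeas N)
    have hle : volume (C ∪ A N) ≤ ENNReal.ofReal 3 := by
      have hsub : C ∪ A N ⊆ Set.Icc (0:ℝ) 3 := by
        refine Set.union_subset hCsub ?_
        intro u hu
        simp only [hA, Set.mem_iInter] at hu
        exact (hu N le_rfl).1
      calc volume (C ∪ A N) ≤ volume (Set.Icc (0:ℝ) 3) := measure_mono hsub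
        _ = ENNReal.ofReal 3 := by
          rw [Real.volume_Icc]; norm_num
    have hgt : ENNReal.ofReal 3 < volume (C ∪ A N) := by
      rw [hun, hCvol]
      calc ENNReal.ofReal 3 < ENNReal.ofReal (3/2) + ENNReal.ofReal (5/2) := by
            rw [← ENNReal.ofReal_add (by norm_num) (by norm_num)]
            rw [ENNReal.ofReal_lt_ofReal_iff] <;> norm_num
        _ ≤ volume (B N) + volume (A N) :=
            add_le_add hNB.le hNA.le
    exact absurd hle (not_le.mpr hgt)
  obtain ⟨u, huA, huC⟩ := hinter
  rw [hC, Set.mem_vadd_set] at huC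
  obtain ⟨b, hb, rfl⟩ := huC
  have hb' : |g (t N + s N + b) - g (t N + s N)| ≤ ε/2 := by
    simp only [hB, Set.mem_iInter] at hb
    exact (hb N le_rfl).2
  have hu' : |g (t N + (s N + b)) - g (t N)| ≤ ε/2 := by
    simp only [hA, Set.mem_iInter] at huA
    have := (huA N le_rfl).2
    simpa using this
  have hkey : |g (t N + s N) - g (t N)| ≤ ε := by
    have heq : t N + s N + b = t N + (s N + b) := by ring
    rw [heq] at hb'
    calc |g (t N + s N) - g (t N)|
        ≤ |g (t N + s N) - g (t N + (s N + b))| + |g (t N + (s N + b)) - g (t N)| :=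
          abs_sub_le _ _ _
      _ ≤ ε/2 + ε/2 := add_le_add (by rwa [abs_sub_comm]) hu'
      _ = ε := by ring
  exact absurd hkey (not_le.mpr (hlt N))

private lemma potter_aux (U : ℝ → ℝ) (hUm : Measurable U) (hUpos : ∀ x > 0, 0 < U x) (α : ℝ)
    (hrv : ∀ q > 0, Tendsto (fun x : ℝ => U (q * x) / U x) atTop (𝓝 (q ^ (-α))))
    (δ : ℝ) (hδ : 0 < δ) (hδ2 : δ ≤ 1/2) :
    ∃ x₀ ≥ (0 : ℝ), ∀ x ≥ x₀, ∀ q ≥ (1 : ℝ),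
      (1 - δ) * q ^ (-α - δ) < U (q * x) / U x ∧
      U (q * x) / U x < (1 + δ) * q ^ (-α + δ) := by
  set g : ℝ → ℝ := fun t => Real.log (U (Real.exp t)) + α * t with hgdef
  have hgm : Measurable g :=
    (Real.measurable_log.comp (hUm.comp Real.measurable_exp)).add
      (measurable_const.mul measurable_id)
  have hgconv : ∀ s : ℝ, Tendsto (fun t => g (t + s) - g t) atTop (𝓝 0) := by
    intro s
    have hq : (0:ℝ) < Real.exp s := Real.exp_pos s
    have h2 : Tendsto (fun t : ℝ => U (Real.exp s * Real.exp t) / U (Real.exp t)) atTop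
        (𝓝 ((Real.exp s) ^ (-α))) := (hrv _ hq).comp Real.tendsto_exp_atTop
    have hpos : (0:ℝ) < (Real.exp s) ^ (-α) := Real.rpow_pos_of_pos hq _
    have h3 := (h2.log hpos.ne').add_const (α * s)
    have hlim : Real.log ((Real.exp s) ^ (-α)) + α * s = 0 := by
      rw [Real.log_rpow hq, Real.log_exp]; ring
    rw [hlim] at h3
    refine h3.congr fun t => ?_
    have h1 : (0:ℝ) < U (Real.exp (t + s)) := hUpos _ (Real.exp_pos _)
    have h2' : (0:ℝ) < U (Real.exp t) := hUpos _ (Real.exp_pos _)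
    have hee : Real.exp s * Real.exp t = Real.exp (t + s) := by
      rw [← Real.exp_add]; ring_nf
    rw [hee, Real.log_div h1.ne' h2'.ne', hgdef]
    simp only []; ring
  -- choose ε
  have hlog : 0 < Real.log (1 + δ) := Real.log_pos (by linarith)
  set ε : ℝ := min (δ/2) (Real.log (1 + δ) / 2) with hε
  have hεpos : 0 < ε := lt_min (by linarith) (by linarith)
  have hε1 : ε ≤ δ/2 := min_le_left _ _
  have hε2 : ε ≤ Real.log (1 + δ) / 2 := min_le_right _ _
  obtain ⟨T, hT⟩ := uc_lemma g hgm hgconv ε hεpos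
  -- iterate the bound
  have hstep : ∀ n : ℕ, ∀ t, T ≤ t → ∀ s, 0 ≤ s → s ≤ (n:ℝ) → |g (t + s) - g t| ≤ n * ε := by
    intro n
    induction n with
    | zero =>
      intro t ht s hs0 hs1
      have : s = 0 := le_antisymm (by exact_mod_cast hs1) hs0
      simp [this]
    | succ n ih =>
      intro t ht s hs0 hs1
      by_cases hcase : s ≤ (n:ℝ)
      · calc |g (t + s) - g t| ≤ n * ε := ih t ht s hs0 hcase
          _ ≤ (n + 1 : ℕ) * ε := by
            push_cast; nlinarith [hεpos.le]
      · by_cases hone : s ≤ 1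
        · calc |g (t + s) - g t| ≤ ε := hT t ht s ⟨hs0, hone⟩
            _ ≤ (n + 1 : ℕ) * ε := by
              push_cast; nlinarith [hεpos.le]
        · push_neg at hone
          have hn1 : s - 1 ≤ (n : ℝ) := by push_cast at hs1 ⊢; linarith
          have ha := ih (t + 1) (by linarith) (s - 1) (by linarith) hn1
          have hb := hT t ht 1 ⟨by norm_num, le_rfl⟩
          have heq : (t + 1) + (s - 1) = t + s := by ring
          rw [heq] at ha
          calc |g (t + s) - g t|
              ≤ |g (t + s) - g (t + 1)| + |g (t + 1) - g t| := abs_sub_le _ _ _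
            _ ≤ n * ε + ε := add_le_add ha hb
            _ = (n + 1 : ℕ) * ε := by push_cast; ring
  have hbound : ∀ t, T ≤ t → ∀ s, 0 ≤ s → |g (t + s) - g t| ≤ (s + 1) * ε := by
    intro t ht s hs
    have h1 := hstep ⌈s⌉₊ t ht s hs (Nat.le_ceil s)
    have h2 : (⌈s⌉₊ : ℝ) < s + 1 := Nat.ceil_lt_add_one hs
    nlinarith [hεpos.le]
  refine ⟨Real.exp T, (Real.exp_pos T).le, ?_⟩
  intro x hx q hq
  have hx0 : 0 < x := lt_of_lt_of_le (Real.exp_pos T) hx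
  have hq0 : 0 < q := lt_of_lt_of_le one_pos hq
  set tt := Real.log x with htt
  set ss := Real.log q with hss
  have hTt : T ≤ tt := by
    rw [htt, ← Real.log_exp T]
    exact Real.log_le_log (Real.exp_pos T) hx
  have hss0 : 0 ≤ ss := Real.log_nonneg hq
  have hqx : 0 < q * x := mul_pos hq0 hx0
  have hUqx : 0 < U (q * x) := hUpos _ hqx
  have hUx : 0 < U x := hUpos _ hx0
  have hgval : g (tt + ss) - g tt - α * ss = Real.log (U (q * x) / U x) := by
    have e1 : Real.exp tt = x := Real.exp_log hx0
    have e2 : Real.exp (tt + ss) = q * x := by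
      rw [Real.exp_add, e1, hss, Real.exp_log hq0]; ring
    rw [hgdef]
    simp only []
    rw [e1, e2, Real.log_div hUqx.ne' hUx.ne']
    ring
  have hR : U (q * x) / U x = Real.exp (g (tt + ss) - g tt - α * ss) := by
    rw [hgval, Real.exp_log (div_pos hUqx hUx)]
  have hL := hbound tt hTt ss hss0
  have habs := abs_le.mp hL
  -- log bounds, strict
  have hlogs : Real.log (1 + δ) + Real.log (1 - δ) < 0 := by
    rw [← Real.log_mul (by linarith) (by linarith)]
    apply Real.log_neg <;> nlinarith
  have hprod : ss * ε ≤ ss * (δ/2) := mul_le_mul_of_nonneg_left hε1 hss0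
  have hδss : 0 ≤ δ * ss := mul_nonneg hδ.le hss0
  have hsplit : (ss + 1) * ε = ss * ε + ε := by ring
  constructor
  · -- lower bound
    have hrw : (1 - δ) * q ^ (-α - δ) = Real.exp (Real.log (1 - δ) + (-α - δ) * ss) := by
      rw [Real.exp_add, Real.exp_log (by linarith : (0:ℝ) < 1 - δ), hss,
        Real.rpow_def_of_pos hq0, mul_comm]
      ring_nf
    rw [hrw, hR]
    apply Real.exp_lt_exp.mpr
    have h1 := habs.1
    rw [hsplit] at h1
    linarith [hprod, hδss, hlogs, hlog, hε2]
  · -- upper bound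
    have hrw : (1 + δ) * q ^ (-α + δ) = Real.exp (Real.log (1 + δ) + (-α + δ) * ss) := by
      rw [Real.exp_add, Real.exp_log (by linarith : (0:ℝ) < 1 + δ), hss,
        Real.rpow_def_of_pos hq0, mul_comm]
      ring_nf
    rw [hrw, hR]
    apply Real.exp_lt_exp.mpr
    have h2 := habs.2
    rw [hsplit] at h2
    linarith [hprod, hδss, hlog, hε2]

theorem stmt13 (U : ℝ → ℝ) (hUm : Measurable U) (hUpos : ∀ x > 0, 0 < U x) (α : ℝ)
    (hrv : ∀ q > 0, Tendsto (fun x : ℝ => U (q * x) / U x) atTop (𝓝 (q ^ (-α))))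
    (δ : ℝ) (hδ : 0 < δ) :
    ∃ x₀ ≥ (0 : ℝ), ∀ x ≥ x₀, ∀ q ≥ (1 : ℝ),
      (1 - δ) * q ^ (-α - δ) < U (q * x) / U x ∧
      U (q * x) / U x < (1 + δ) * q ^ (-α + δ) := by
  set δ' : ℝ := min δ (1/2) with hδ'def
  have hδ'pos : 0 < δ' := lt_min hδ (by norm_num)
  have hδ'le : δ' ≤ 1/2 := min_le_right _ _
  have hδ'δ : δ' ≤ δ := min_le_left _ _
  obtain ⟨x₀, hx₀, H⟩ := potter_aux U hUm hUpos α hrv δ' hδ'pos hδ'le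
  refine ⟨x₀, hx₀, ?_⟩
  intro x hx q hq
  obtain ⟨h1, h2⟩ := H x hx q hq
  have hq0 : (0:ℝ) < q := lt_of_lt_of_le one_pos hq
  constructor
  · refine lt_of_le_of_lt ?_ h1
    by_cases hcase : 1 - δ ≤ 0
    · have hpos : 0 < (1 - δ') * q ^ (-α - δ') :=
        mul_pos (by linarith) (Real.rpow_pos_of_pos hq0 _)
      have : (1 - δ) * q ^ (-α - δ) ≤ 0 :=
        mul_nonpos_of_nonpos_of_nonneg hcase (Real.rpow_pos_of_pos hq0 _).le
      linarith
    · push_neg at hcase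
      have he : q ^ (-α - δ) ≤ q ^ (-α - δ') :=
        Real.rpow_le_rpow_of_exponent_le hq (by linarith)
      exact mul_le_mul (by linarith) he (Real.rpow_pos_of_pos hq0 _).le (by linarith)
  · refine lt_of_lt_of_le h2 ?_
    have he : q ^ (-α + δ') ≤ q ^ (-α + δ) :=
      Real.rpow_le_rpow_of_exponent_le hq (by linarith)
    exact mul_le_mul (by linarith) he (Real.rpow_pos_of_pos hq0 _).le (by linarith)
end

section
/- Let U : (0,∞) → (0,∞) be locally integrable, integrable on intervals containing 0, and regularly varying at infinity with index -α where α ≤ 1. Then x ↦ ∫₀ˣ U(t) dt is regularly varying at infinity with index 1-α, and lim_{x→∞} x U(x)/∫₀ˣ U(t) dt = 1 - α. -/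
/-!
Write `V x = ∫₀ˣ U`. The uniform convergence theorem (proved via Egorov, in additive form for
`t ↦ log U (exp t) + α t`) bounds `U (s x) / U x` by `e · s ^ (-α)` uniformly for `s ∈ [1, q]`,
so dominated convergence gives `(V (q x) - V x) / (x U x) → ∫₁^q s ^ (-α) ds`.

If `V → ∞`, then `q U (q t) - q ^ (1 - α) U t = o (U t)` integrates to
`V (q x) - q ^ (1 - α) V x = o (V x)`, which is the first claim; dividing `V (2x) / V x - 1` by
`(V (2x) - V x) / (x U x)` then gives `x U x / V x → (2 ^ (1 - α) - 1) / ∫₁² s ^ (-α) ds = 1 - α`.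
If `V` stays bounded, then `x U x → 0`; as `x U x` is regularly varying with index `1 - α ≥ 0`,
this forces `α = 1`, and both claims reduce to `V (q x) / V x → 1` and `x U x / V x → 0`.
-/

open Filter Topology MeasureTheory Set Asymptotics

lemma exists_mem_notMem_and_sub_notMem {G : Type*} [AddGroup G] [MeasurableSpace G]
    [MeasurableAdd G] (μ : Measure G) [μ.IsAddRightInvariant] {A B I : Set G}
    (h : μ A + μ B < μ I) (u : G) : ∃ v ∈ I, v ∉ A ∧ v - u ∉ B := by
  by_contra! hcon
  have hI : I ⊆ A ∪ (· + -u) ⁻¹' B := fun v hv => by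
    by_cases hA : v ∈ A
    · exact Or.inl hA
    · exact Or.inr (by simpa [sub_eq_add_neg] using hcon v hv hA)
  refine h.not_ge ?_
  calc μ I ≤ μ (A ∪ (· + -u) ⁻¹' B) := measure_mono hI
    _ ≤ μ A + μ ((· + -u) ⁻¹' B) := measure_union_le _ _
    _ = μ A + μ B := by rw [measure_preimage_add_right]

section UniformConvergence

variable {h : ℝ → ℝ}

lemma exists_measure_le_eventually_forall_abs_sub_lt (hm : Measurable h)
    (hlim : ∀ u, Tendsto (fun t => h (t + u) - h t) atTop (𝓝 0))
    {s : ℕ → ℝ} (hs : Tendsto s atTop atTop)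
    {S : Set ℝ} (hSm : MeasurableSet S) (hS : volume S ≠ ⊤) {δ ε : ℝ} (hδ : 0 < δ)
    (hε : 0 < ε) :
    ∃ B, volume B ≤ ENNReal.ofReal δ ∧
      ∀ᶠ n in atTop, ∀ v ∈ S \ B, |h (s n + v) - h (s n)| < ε := by
  obtain ⟨B, -, -, hB, hunif⟩ := tendstoUniformlyOn_of_ae_tendsto (μ := volume)
    (f := fun n v => h (s n + v) - h (s n)) (g := 0)
    (fun n => ((hm.comp (measurable_const_add _)).sub_const _).stronglyMeasurable)
    stronglyMeasurable_const hSm hS (ae_of_all _ fun v _ => (hlim v).comp hs) hδ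
  refine ⟨B, hB, ?_⟩
  simpa [Real.dist_eq, abs_sub_comm] using Metric.tendstoUniformlyOn_iff.1 hunif ε hε

lemma tendsto_sub_of_forall_mem_Icc (hm : Measurable h)
    (hlim : ∀ u, Tendsto (fun t => h (t + u) - h t) atTop (𝓝 0)) {b : ℝ} {t u : ℕ → ℝ}
    (ht : Tendsto t atTop atTop) (hu : ∀ n, u n ∈ Icc (-b) b) :
    Tendsto (fun n => h (t n + u n) - h (t n)) atTop (𝓝 0) := by
  have htu : Tendsto (fun n => t n + u n) atTop atTop :=
    tendsto_atTop_mono (fun n => by linarith [(hu n).1])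
      (tendsto_atTop_add_const_right _ (-b) ht)
  refine Metric.tendsto_nhds.2 fun ε hε => ?_
  obtain ⟨A, hA, hAε⟩ := exists_measure_le_eventually_forall_abs_sub_lt hm hlim ht
    measurableSet_Icc measure_Icc_lt_top.ne (S := Icc (-1) 1) one_half_pos (half_pos hε)
  obtain ⟨B, hB, hBε⟩ := exists_measure_le_eventually_forall_abs_sub_lt hm hlim htu
    measurableSet_Icc measure_Icc_lt_top.ne (S := Icc (-(b + 1)) (b + 1)) one_half_pos
    (half_pos hε)
  -- `A` and the translate of `B` by `u n` cannot cover `Icc (-1) 1`; for a `v` outside both,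
  -- the increment `h (t n + u n) - h (t n)` splits through `t n + v` into two small ones
  have hAB : volume A + volume B < volume (Icc (-1 : ℝ) 1) := by
    calc volume A + volume B ≤ ENNReal.ofReal (1 / 2) + ENNReal.ofReal (1 / 2) :=
        add_le_add hA hB
      _ < volume (Icc (-1 : ℝ) 1) := by
        rw [Real.volume_Icc, ← ENNReal.ofReal_add (by norm_num) (by norm_num),
          ENNReal.ofReal_lt_ofReal_iff (by norm_num)]
        norm_num
  filter_upwards [hAε, hBε] with n hAn hBn
  obtain ⟨v, hv, hvA, hvB⟩ := exists_mem_notMem_and_sub_notMem volume hAB (u n)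
  have hvu : v - u n ∈ Icc (-(b + 1)) (b + 1) := by
    constructor <;> linarith [hv.1, hv.2, (hu n).1, (hu n).2]
  have hB' := hBn _ ⟨hvu, hvB⟩
  rw [add_add_sub_cancel] at hB'
  rw [Real.dist_eq, sub_zero]
  calc |h (t n + u n) - h (t n)|
      = |(h (t n + v) - h (t n)) - (h (t n + v) - h (t n + u n))| := by ring_nf
    _ ≤ |h (t n + v) - h (t n)| + |h (t n + v) - h (t n + u n)| := abs_sub _ _
    _ < ε / 2 + ε / 2 := add_lt_add (hAn v ⟨hv, hvA⟩) hB'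
    _ = ε := add_halves ε

theorem eventually_forall_abs_sub_lt (hm : Measurable h)
    (hlim : ∀ u, Tendsto (fun t => h (t + u) - h t) atTop (𝓝 0)) (b : ℝ) {ε : ℝ} (hε : 0 < ε) :
    ∀ᶠ t in atTop, ∀ u ∈ Icc (-b) b, |h (t + u) - h t| < ε := by
  by_contra hcon
  simp only [not_eventually, frequently_atTop, not_forall, not_lt, exists_prop] at hcon
  choose t ht u hu hbad using fun n : ℕ => hcon n
  obtain ⟨n, hn⟩ := (Metric.tendsto_nhds.1 (tendsto_sub_of_forall_mem_Icc hm hlim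
    (tendsto_atTop_mono ht tendsto_natCast_atTop_atTop) hu) ε hε).exists
  rw [Real.dist_eq, sub_zero] at hn
  exact (hbad n).not_gt hn

end UniformConvergence

theorem Asymptotics.IsLittleO.integral_Ioc {E : Type*} [NormedAddCommGroup E] [NormedSpace ℝ E]
    {f : ℝ → E} {g : ℝ → ℝ} (h : f =o[atTop] g) (hf : ∀ x > 0, IntegrableOn f (Ioc 0 x))
    (hg : ∀ x > 0, IntegrableOn g (Ioc 0 x)) (hg0 : ∀ t > 0, 0 ≤ g t)
    (hgtop : Tendsto (fun x => ∫ t in Ioc 0 x, g t) atTop atTop) :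
    (fun x => ∫ t in Ioc 0 x, f t) =o[atTop] fun x => ∫ t in Ioc 0 x, g t := by
  refine isLittleO_iff.2 fun ε hε => ?_
  obtain ⟨M, hM0, hM⟩ : ∃ M > 0, ∀ t ≥ M, ‖f t‖ ≤ ε / 2 * g t := by
    obtain ⟨M, hM⟩ := eventually_atTop.1
      ((isLittleO_iff.1 h (half_pos hε)).and (eventually_gt_atTop 0))
    refine ⟨max M 1, by positivity, fun t ht => ?_⟩
    obtain ⟨hft, ht0⟩ := hM t (le_of_max_le_left ht)
    rwa [Real.norm_of_nonneg (hg0 t ht0)] at hft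
  have hhead : (fun _ => ∫ t in Ioc 0 M, f t) =o[atTop] fun x => ∫ t in Ioc 0 x, g t :=
    isLittleO_const_left.2 (Or.inr (tendsto_norm_atTop_atTop.comp hgtop))
  filter_upwards [isLittleO_iff.1 hhead (half_pos hε), eventually_ge_atTop M,
    hgtop.eventually_ge_atTop 0] with x hx hxM hgx
  have hx0 : 0 < x := hM0.trans_le hxM
  have hMx : Ioc M x ⊆ Ioc 0 x := Ioc_subset_Ioc_left hM0.le
  have htail : ‖∫ t in Ioc M x, f t‖ ≤ ε / 2 * ∫ t in Ioc 0 x, g t := calc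
    ‖∫ t in Ioc M x, f t‖ ≤ ∫ t in Ioc M x, ε / 2 * g t :=
      norm_integral_le_of_norm_le (((hg x hx0).mono_set hMx).const_mul _)
        ((ae_restrict_iff' measurableSet_Ioc).2 (ae_of_all _ fun t ht => hM t ht.1.le))
    _ = ε / 2 * ∫ t in Ioc M x, g t := integral_const_mul _ _
    _ ≤ ε / 2 * ∫ t in Ioc 0 x, g t := mul_le_mul_of_nonneg_left
      (setIntegral_mono_set (hg x hx0)
        ((ae_restrict_iff' measurableSet_Ioc).2 (ae_of_all _ fun t ht => hg0 t ht.1))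
        hMx.eventuallyLE) (by positivity)
  have hsplit : ∫ t in Ioc 0 x, f t = (∫ t in Ioc 0 M, f t) + ∫ t in Ioc M x, f t := by
    rw [← setIntegral_union (Ioc_disjoint_Ioc_of_le le_rfl) measurableSet_Ioc
      ((hf x hx0).mono_set (Ioc_subset_Ioc_right hxM)) ((hf x hx0).mono_set hMx),
      Ioc_union_Ioc_eq_Ioc hM0.le hxM]
  rw [Real.norm_of_nonneg hgx] at hx ⊢
  rw [hsplit]
  calc ‖(∫ t in Ioc 0 M, f t) + ∫ t in Ioc M x, f t‖
      ≤ ‖∫ t in Ioc 0 M, f t‖ + ‖∫ t in Ioc M x, f t‖ := norm_add_le _ _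
    _ ≤ ε / 2 * (∫ t in Ioc 0 x, g t) + ε / 2 * ∫ t in Ioc 0 x, g t := add_le_add hx htail
    _ = ε * ∫ t in Ioc 0 x, g t := by ring

lemma not_tendsto_nhds_zero_of_tendsto_div {f : ℝ → ℝ} (hf : ∀ x > 0, 0 < f x) {q L : ℝ}
    (hq : 1 < q) (hL : 1 < L) (h : Tendsto (fun x => f (q * x) / f x) atTop (𝓝 L)) :
    ¬Tendsto f atTop (𝓝 0) := by
  intro h0
  obtain ⟨X, hX⟩ :=
    eventually_atTop.1 ((h.eventually (lt_mem_nhds hL)).and (eventually_gt_atTop 0))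
  set Y := max X 1
  have hY : 0 < Y := lt_max_of_lt_right one_pos
  have hmono : Monotone fun n : ℕ => f (q ^ n * Y) := monotone_nat_of_le_succ fun n => by
    obtain ⟨hgrow, hpos⟩ := hX (q ^ n * Y)
      ((le_max_left _ _).trans (le_mul_of_one_le_left hY.le (one_le_pow₀ hq.le)))
    rw [pow_succ, mul_comm _ q, mul_assoc]
    exact ((one_lt_div (hf _ hpos)).1 hgrow).le
  have hlim : Tendsto (fun n : ℕ => f (q ^ n * Y)) atTop (𝓝 0) :=
    h0.comp ((tendsto_pow_atTop_atTop_of_one_lt hq).atTop_mul_const hY)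
  exact (hf Y hY).not_ge (by simpa using hmono.ge_of_tendsto hlim 0)

lemma mul_rpow_neg {q : ℝ} (hq : 0 < q) (α : ℝ) : q * q ^ (-α) = q ^ (1 - α) := by
  rw [Real.rpow_sub hq, Real.rpow_one, Real.rpow_neg hq.le, div_eq_mul_inv]

lemma one_sub_mul_integral_rpow_neg {q : ℝ} (hq : 0 < q) (α : ℝ) :
    (1 - α) * ∫ s in (1 : ℝ)..q, s ^ (-α) = q ^ (1 - α) - 1 := by
  rcases eq_or_ne α 1 with rfl | hα
  · simp
  · rw [integral_rpow (Or.inr ⟨fun h => hα (neg_inj.1 h), notMem_uIcc_of_lt one_pos hq⟩),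
      show -α + 1 = 1 - α by ring, Real.one_rpow, mul_div_cancel₀ _ (sub_ne_zero.2 hα.symm)]

lemma intervalIntegral_rpow_pos {q : ℝ} (hq : 1 < q) (r : ℝ) : 0 < ∫ s in (1 : ℝ)..q, s ^ r :=
  intervalIntegral.intervalIntegral_pos_of_pos_on
    (intervalIntegral.intervalIntegrable_rpow (Or.inr (notMem_uIcc_of_lt one_pos (by linarith))))
    (fun s hs => Real.rpow_pos_of_pos (one_pos.trans hs.1) _) hq

section RegularVariation

variable {U : ℝ → ℝ} {α : ℝ}

lemma integrableOn_Ioc_zero (hloc : ∀ x > 0, IntegrableOn U (Ioc 0 x)) (x : ℝ) :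
    IntegrableOn U (Ioc 0 x) := by
  rcases lt_or_ge 0 x with hx | hx
  · exact hloc x hx
  · rw [Ioc_eq_empty hx.not_gt]
    exact integrableOn_empty

lemma intervalIntegrable_zero_of_integrableOn_Ioc (hloc : ∀ x > 0, IntegrableOn U (Ioc 0 x))
    {x : ℝ} (hx : 0 ≤ x) : IntervalIntegrable U volume 0 x :=
  (intervalIntegrable_iff_integrableOn_Ioc_of_le hx).2 (integrableOn_Ioc_zero hloc x)

lemma monotone_integral_Ioc (hUpos : ∀ x > 0, 0 < U x)
    (hloc : ∀ x > 0, IntegrableOn U (Ioc 0 x)) : Monotone fun x => ∫ t in Ioc 0 x, U t :=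
  fun _ y hxy => setIntegral_mono_set (integrableOn_Ioc_zero hloc y)
    ((ae_restrict_iff' measurableSet_Ioc).2 (ae_of_all _ fun t ht => (hUpos t ht.1).le))
    (Ioc_subset_Ioc_right hxy).eventuallyLE

lemma integral_Ioc_lt_integral_Ioc (hUpos : ∀ x > 0, 0 < U x)
    (hloc : ∀ x > 0, IntegrableOn U (Ioc 0 x)) {x y : ℝ} (hx : 0 ≤ x) (hxy : x < y) :
    ∫ t in Ioc 0 x, U t < ∫ t in Ioc 0 y, U t := by
  have hy : 0 ≤ y := hx.trans hxy.le
  rw [← sub_pos, ← intervalIntegral.integral_of_le hx, ← intervalIntegral.integral_of_le hy,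
    intervalIntegral.integral_interval_sub_left
      (intervalIntegrable_zero_of_integrableOn_Ioc hloc hy)
      (intervalIntegrable_zero_of_integrableOn_Ioc hloc hx)]
  refine intervalIntegral.intervalIntegral_pos_of_pos_on ?_
    (fun t ht => hUpos t (hx.trans_lt ht.1)) hxy
  exact (intervalIntegrable_zero_of_integrableOn_Ioc hloc hx).symm.trans
    (intervalIntegrable_zero_of_integrableOn_Ioc hloc hy)

lemma integral_Ioc_pos (hUpos : ∀ x > 0, 0 < U x) (hloc : ∀ x > 0, IntegrableOn U (Ioc 0 x))
    {x : ℝ} (hx : 0 < x) : 0 < ∫ t in Ioc 0 x, U t := by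
  simpa using integral_Ioc_lt_integral_Ioc hUpos hloc le_rfl hx

lemma integral_Ioc_comp_mul_left {q x : ℝ} (hq : 0 < q) (hx : 0 ≤ x) :
    ∫ t in Ioc 0 x, U (q * t) = q⁻¹ * ∫ t in Ioc 0 (q * x), U t := by
  rw [← intervalIntegral.integral_of_le hx, intervalIntegral.integral_comp_mul_left _ hq.ne',
    mul_zero, intervalIntegral.integral_of_le (by positivity), smul_eq_mul]

lemma integrableOn_Ioc_comp_mul_left (hloc : ∀ x > 0, IntegrableOn U (Ioc 0 x)) {q : ℝ}
    (hq : 0 < q) (x : ℝ) : IntegrableOn (fun t => U (q * t)) (Ioc 0 x) := by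
  rcases lt_or_ge 0 x with hx | hx
  · have hqx := (intervalIntegrable_zero_of_integrableOn_Ioc hloc (x := q * x)
      (by positivity)).comp_mul_left (c := q)
    rw [zero_div, mul_div_cancel_left₀ _ hq.ne'] at hqx
    exact (intervalIntegrable_iff_integrableOn_Ioc_of_le hx.le).1 hqx
  · rw [Ioc_eq_empty hx.not_gt]
    exact integrableOn_empty

lemma eventually_forall_div_le_exp_mul_rpow (hUm : Measurable U) (hUpos : ∀ x > 0, 0 < U x)
    (hrv : ∀ q > 0, Tendsto (fun x => U (q * x) / U x) atTop (𝓝 (q ^ (-α))))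
    (q : ℝ) {ε : ℝ} (hε : 0 < ε) :
    ∀ᶠ x in atTop, ∀ s ∈ Icc 1 q, U (s * x) / U x ≤ Real.exp ε * s ^ (-α) := by
  -- the additive form of the slowly varying function `x ↦ x ^ α * U x`
  set h : ℝ → ℝ := fun t => Real.log (U (Real.exp t)) + α * t
  have hlog : ∀ x > 0, ∀ s > 0,
      h (Real.log x + Real.log s) - h (Real.log x) =
        Real.log (U (s * x) / U x) + α * Real.log s := by
    intro x hx s hs
    simp only [h, Real.exp_add, Real.exp_log hx, Real.exp_log hs, mul_comm x s]
    rw [Real.log_div (hUpos _ (by positivity)).ne' (hUpos x hx).ne']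
    ring
  have hlim : ∀ u, Tendsto (fun t => h (t + u) - h t) atTop (𝓝 0) := by
    intro u
    have hu := (((hrv _ (Real.exp_pos u)).comp Real.tendsto_exp_atTop).log
      (Real.rpow_pos_of_pos (Real.exp_pos u) _).ne').add_const (α * u)
    rw [Real.log_rpow (Real.exp_pos u), Real.log_exp, neg_mul, neg_add_cancel] at hu
    refine hu.congr fun t => ?_
    simpa using (hlog _ (Real.exp_pos t) _ (Real.exp_pos u)).symm
  have hm : Measurable h :=
    (Real.measurable_log.comp (hUm.comp Real.measurable_exp)).add
      (measurable_const.mul measurable_id)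
  filter_upwards [Real.tendsto_log_atTop.eventually
    (eventually_forall_abs_sub_lt hm hlim (Real.log q) hε), eventually_gt_atTop 0] with x hx hx0
  rintro s ⟨hs1, hsq⟩
  have hs0 : 0 < s := by linarith
  have hlogs : Real.log s ≤ Real.log q := Real.log_le_log hs0 hsq
  have hbd := (abs_lt.1 (hx (Real.log s) ⟨by linarith [Real.log_nonneg hs1], hlogs⟩)).2
  rw [hlog x hx0 s hs0, ← lt_sub_iff_add_lt,
    Real.log_lt_iff_lt_exp (div_pos (hUpos _ (by positivity)) (hUpos x hx0))] at hbd
  rw [Real.rpow_def_of_pos hs0, ← Real.exp_add]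
  exact hbd.le.trans_eq (by ring_nf)

lemma tendsto_intervalIntegral_div (hUm : Measurable U) (hUpos : ∀ x > 0, 0 < U x)
    (hrv : ∀ q > 0, Tendsto (fun x => U (q * x) / U x) atTop (𝓝 (q ^ (-α)))) {q : ℝ}
    (hq : 1 ≤ q) :
    Tendsto (fun x => ∫ s in (1 : ℝ)..q, U (s * x) / U x) atTop
      (𝓝 (∫ s in (1 : ℝ)..q, s ^ (-α))) := by
  refine intervalIntegral.tendsto_integral_filter_of_dominated_convergence
    (fun s => Real.exp 1 * s ^ (-α))
    (Eventually.of_forall fun x =>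
      ((hUm.comp (measurable_id.mul_const x)).div_const _).aestronglyMeasurable)
    ?_ ((intervalIntegral.intervalIntegrable_rpow (Or.inr ?_)).const_mul _) ?_
  · filter_upwards [eventually_forall_div_le_exp_mul_rpow hUm hUpos hrv q one_pos,
      eventually_gt_atTop 0] with x hx hx0
    refine ae_of_all _ fun s hs => ?_
    rw [uIoc_of_le hq] at hs
    have hs0 : 0 < s := by linarith [hs.1]
    rw [Real.norm_of_nonneg (div_pos (hUpos _ (by positivity)) (hUpos x hx0)).le]
    exact hx s (Ioc_subset_Icc_self hs)
  · rw [uIcc_of_le hq]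
    exact fun h0 => by linarith [h0.1]
  · refine ae_of_all _ fun s hs => ?_
    rw [uIoc_of_le hq] at hs
    exact hrv s (by linarith [hs.1])

lemma integral_Ioc_mul_sub_integral_Ioc (hloc : ∀ x > 0, IntegrableOn U (Ioc 0 x)) {x q : ℝ}
    (hx : 0 < x) (hq : 0 < q) :
    (∫ t in Ioc 0 (q * x), U t) - ∫ t in Ioc 0 x, U t = x * ∫ s in (1 : ℝ)..q, U (s * x) := by
  rw [intervalIntegral.integral_comp_mul_right _ hx.ne', one_mul, smul_eq_mul,
    mul_inv_cancel_left₀ hx.ne', ← intervalIntegral.integral_of_le (by positivity),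
    ← intervalIntegral.integral_of_le hx.le, intervalIntegral.integral_interval_sub_left
      (intervalIntegrable_zero_of_integrableOn_Ioc hloc (by positivity))
      (intervalIntegrable_zero_of_integrableOn_Ioc hloc hx.le)]

theorem tendsto_integral_Ioc_mul_sub_div (hUm : Measurable U) (hUpos : ∀ x > 0, 0 < U x)
    (hloc : ∀ x > 0, IntegrableOn U (Ioc 0 x))
    (hrv : ∀ q > 0, Tendsto (fun x => U (q * x) / U x) atTop (𝓝 (q ^ (-α)))) {q : ℝ}
    (hq : 1 ≤ q) :
    Tendsto (fun x => ((∫ t in Ioc 0 (q * x), U t) - ∫ t in Ioc 0 x, U t) / (x * U x)) atTop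
      (𝓝 (∫ s in (1 : ℝ)..q, s ^ (-α))) := by
  refine (tendsto_intervalIntegral_div hUm hUpos hrv hq).congr' ?_
  filter_upwards [eventually_gt_atTop 0] with x hx
  rw [integral_Ioc_mul_sub_integral_Ioc hloc hx (by linarith), intervalIntegral.integral_div,
    mul_div_mul_left _ _ hx.ne']

theorem tendsto_integral_Ioc_mul_div_of_tendsto_atTop (hUpos : ∀ x > 0, 0 < U x)
    (hloc : ∀ x > 0, IntegrableOn U (Ioc 0 x)) {q L : ℝ} (hq : 0 < q)
    (hL : Tendsto (fun x => U (q * x) / U x) atTop (𝓝 L))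
    (htop : Tendsto (fun x => ∫ t in Ioc 0 x, U t) atTop atTop) :
    Tendsto (fun x => (∫ t in Ioc 0 (q * x), U t) / ∫ t in Ioc 0 x, U t) atTop (𝓝 (q * L)) := by
  set f : ℝ → ℝ := fun t => q * U (q * t) - q * L * U t
  have hfU : f =o[atTop] U := by
    rw [isLittleO_iff_tendsto' ((eventually_gt_atTop 0).mono fun x hx h0 =>
      absurd h0 (hUpos x hx).ne')]
    have hlim := (hL.sub_const L).const_mul q
    rw [sub_self, mul_zero] at hlim
    refine hlim.congr' ((eventually_gt_atTop 0).mono fun x hx => ?_)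
    field_simp [(hUpos x hx).ne']
    ring
  have hf : ∀ x > 0, IntegrableOn f (Ioc 0 x) := fun x hx =>
    ((integrableOn_Ioc_comp_mul_left hloc hq x).const_mul q).sub ((hloc x hx).const_mul _)
  have hint : ∀ x > 0,
      ∫ t in Ioc 0 x, f t = (∫ t in Ioc 0 (q * x), U t) - q * L * ∫ t in Ioc 0 x, U t := by
    intro x hx
    rw [integral_sub ((integrableOn_Ioc_comp_mul_left hloc hq x).const_mul q)
      ((hloc x hx).const_mul _), integral_const_mul, integral_const_mul,
      integral_Ioc_comp_mul_left hq hx.le, mul_inv_cancel_left₀ hq.ne']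
  have hrem := ((hfU.integral_Ioc hf hloc (fun t ht => (hUpos t ht).le)
    htop).tendsto_div_nhds_zero).add_const (q * L)
  rw [zero_add] at hrem
  refine hrem.congr' ((eventually_gt_atTop 0).mono fun x hx => ?_)
  rw [hint x hx]
  field_simp [(integral_Ioc_pos hUpos hloc hx).ne']
  ring

lemma tendsto_mul_nhds_zero_of_tendsto_integral_Ioc (hUm : Measurable U)
    (hUpos : ∀ x > 0, 0 < U x) (hloc : ∀ x > 0, IntegrableOn U (Ioc 0 x))
    (hrv : ∀ q > 0, Tendsto (fun x => U (q * x) / U x) atTop (𝓝 (q ^ (-α)))) {S : ℝ}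
    (hS : Tendsto (fun x => ∫ t in Ioc 0 x, U t) atTop (𝓝 S)) :
    Tendsto (fun x => x * U x) atTop (𝓝 0) := by
  have hdiff : Tendsto (fun x => (∫ t in Ioc 0 (2 * x), U t) - ∫ t in Ioc 0 x, U t) atTop
      (𝓝 0) := by
    simpa using (hS.comp (tendsto_id.const_mul_atTop two_pos)).sub hS
  have hlim := hdiff.div (tendsto_integral_Ioc_mul_sub_div hUm hUpos hloc hrv one_le_two)
    (intervalIntegral_rpow_pos one_lt_two _).ne'
  rw [zero_div] at hlim
  refine hlim.congr' ((eventually_gt_atTop 0).mono fun x hx => ?_)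
  have hd := integral_Ioc_lt_integral_Ioc hUpos hloc hx.le (by linarith : x < 2 * x)
  exact div_div_cancel₀ (sub_pos.2 hd).ne'

lemma eq_one_of_tendsto_mul_nhds_zero (hUpos : ∀ x > 0, 0 < U x)
    (hrv : ∀ q > 0, Tendsto (fun x => U (q * x) / U x) atTop (𝓝 (q ^ (-α)))) (hα : α ≤ 1)
    (h0 : Tendsto (fun x => x * U x) atTop (𝓝 0)) : α = 1 := by
  by_contra hne
  refine not_tendsto_nhds_zero_of_tendsto_div (fun x hx => mul_pos hx (hUpos x hx)) one_lt_two
    ?_ (((hrv 2 two_pos).const_mul 2).congr' ?_) h0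
  · rw [mul_rpow_neg two_pos]
    exact Real.one_lt_rpow one_lt_two (sub_pos.2 (lt_of_le_of_ne hα hne))
  · filter_upwards [eventually_gt_atTop 0] with x hx
    field_simp [(hUpos x hx).ne', hx.ne']

lemma tendsto_mul_div_integral_Ioc (hUm : Measurable U) (hUpos : ∀ x > 0, 0 < U x)
    (hloc : ∀ x > 0, IntegrableOn U (Ioc 0 x))
    (hrv : ∀ q > 0, Tendsto (fun x => U (q * x) / U x) atTop (𝓝 (q ^ (-α))))
    (h2 : Tendsto (fun x => (∫ t in Ioc 0 (2 * x), U t) / ∫ t in Ioc 0 x, U t) atTop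
      (𝓝 (2 ^ (1 - α)))) :
    Tendsto (fun x => x * U x / ∫ t in Ioc 0 x, U t) atTop (𝓝 (1 - α)) := by
  have hc := intervalIntegral_rpow_pos one_lt_two (-α)
  -- `V (2x) / V x - 1 = (x U x / V x) * ((V (2x) - V x) / (x U x))`
  have hlim := (h2.sub_const 1).div
    (tendsto_integral_Ioc_mul_sub_div hUm hUpos hloc hrv one_le_two) hc.ne'
  rw [← one_sub_mul_integral_rpow_neg two_pos, mul_div_cancel_right₀ _ hc.ne'] at hlim
  refine hlim.congr' ((eventually_gt_atTop 0).mono fun x hx => ?_)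
  have hd := integral_Ioc_lt_integral_Ioc hUpos hloc hx.le (by linarith : x < 2 * x)
  simp only [Pi.div_apply]
  field_simp [(sub_pos.2 hd).ne', (mul_pos hx (hUpos x hx)).ne',
    (integral_Ioc_pos hUpos hloc hx).ne']

end RegularVariation

theorem stmt14 (U : ℝ → ℝ) (hUm : Measurable U) (hUpos : ∀ x > 0, 0 < U x) (α : ℝ) (hα : α ≤ 1)
    (hloc : ∀ x > 0, IntegrableOn U (Ioc 0 x) volume)
    (hrv : ∀ q > 0, Tendsto (fun x : ℝ => U (q * x) / U x) atTop (𝓝 (q ^ (-α)))) :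
    (∀ q > 0, Tendsto
        (fun x : ℝ => (∫ t in Ioc (0:ℝ) (q * x), U t) / ∫ t in Ioc (0:ℝ) x, U t)
        atTop (𝓝 (q ^ (1 - α)))) ∧
    Tendsto (fun x : ℝ => x * U x / ∫ t in Ioc (0:ℝ) x, U t) atTop (𝓝 (1 - α)) := by
  rcases tendsto_atTop_of_monotone (monotone_integral_Ioc hUpos hloc) with htop | ⟨S, hS⟩
  · have hV : ∀ q > 0, Tendsto
        (fun x : ℝ => (∫ t in Ioc (0:ℝ) (q * x), U t) / ∫ t in Ioc (0:ℝ) x, U t)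
        atTop (𝓝 (q ^ (1 - α))) := fun q hq => by
      simpa only [mul_rpow_neg hq] using
        tendsto_integral_Ioc_mul_div_of_tendsto_atTop hUpos hloc hq (hrv q hq) htop
    exact ⟨hV, tendsto_mul_div_integral_Ioc hUm hUpos hloc hrv (hV 2 two_pos)⟩
  · have hxU := tendsto_mul_nhds_zero_of_tendsto_integral_Ioc hUm hUpos hloc hrv hS
    obtain rfl := eq_one_of_tendsto_mul_nhds_zero hUpos hrv hα hxU
    have hS0 : S ≠ 0 := ((integral_Ioc_pos hUpos hloc one_pos).trans_le
      ((monotone_integral_Ioc hUpos hloc).ge_of_tendsto hS 1)).ne'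
    rw [sub_self]
    refine ⟨fun q hq => ?_, ?_⟩
    · have hq1 := (hS.comp (tendsto_id.const_mul_atTop hq)).div hS hS0
      rwa [div_self hS0, ← Real.rpow_zero q] at hq1
    · have h0 := hxU.div hS hS0
      rwa [zero_div] at h0
end

section
/- Let (X_n)_{n ≥ -1} be a second-order Galton–Watson process without immigration with X_0 = 1, X_{-1} = 0, offspring variables ξ and η satisfying E(ξ²) < ∞ and E(η²) < ∞, and let ϱ = (m_ξ + √(m_ξ²+4m_η))/2 be the spectral radius of the mean matrix, where m_ξ = E(ξ), m_η = E(η). If ϱ ∈ (0,1), then for all n ≥ 1, E(X_n²) ≤ c·ϱⁿ with c = 1 + Var(ξ)/(ϱ(1-ϱ)) + Var(η)/(ϱ²(1-ϱ)). -/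
/-!
Moments are handled in `ℝ≥0∞`, so that no integrability has to be checked along the way.
Generation `n + 2` is independent of the past, so conditioning on the sizes of the two previous
generations turns `A n = E Xₙ`, `B n = E Xₙ²` and the mixed moment `D n = E Xₙ₊₁Xₙ` into a linear
recursion:
`A (n+2) = m_ξ A (n+1) + m_η A n`, `D (n+1) = m_ξ B (n+1) + m_η D n` and
`B (n+2) = Var ξ · A (n+1) + Var η · A n + m_ξ² B (n+1) + m_η² B n + 2 m_ξ m_η D n`.
Since `ϱ² = m_ξ ϱ + m_η` and `ϱ < 1`, an induction bounds `A n`, `B n`, `D n` by multiples of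
`ϱⁿ`; the constant `c` is exactly what closes the step for `B`, namely
`Var ξ · ϱ + Var η + c ϱ³ ≤ c ϱ²`.
-/

open MeasureTheory ProbabilityTheory Filter Topology
open scoped ENNReal

section

variable {Ω : Type*}

lemma measurable_randomSum {M : Type*} [AddCommMonoid M] [MeasurableSpace M] [MeasurableAdd₂ M]
    {m : MeasurableSpace Ω} {N : Ω → ℕ} (hN : Measurable N) {f : ℕ → Ω → M}
    (hf : ∀ i, Measurable (f i)) :
    Measurable fun ω => ∑ i ∈ Finset.range (N ω), f i ω :=
  (measurable_from_prod_countable_left (f := fun p : Ω × ℕ => ∑ i ∈ Finset.range p.2, f i p.1)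
    fun k => Finset.measurable_sum (Finset.range k) fun i _ => hf i).comp (measurable_id.prodMk hN)

variable {mΩ : MeasurableSpace Ω} {μ : Measure Ω}

lemma lintegral_comp_eq_tsum_of_indep {α : Type*} [MeasurableSpace α] [Countable α]
    [MeasurableSingletonClass α] {m₁ m₂ : MeasurableSpace Ω} (h₁ : m₁ ≤ mΩ) (h₂ : m₂ ≤ mΩ)
    (hind : Indep m₁ m₂ μ) {N : Ω → α} (hN : Measurable[m₁] N) {F : α → Ω → ℝ≥0∞}
    (hF : ∀ a, Measurable[m₂] (F a)) :
    ∫⁻ ω, F (N ω) ω ∂μ = ∑' a, μ (N ⁻¹' {a}) * ∫⁻ ω, F a ω ∂μ := by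
  have hfiber : ∀ a, MeasurableSet[m₁] (N ⁻¹' {a}) := fun a => hN (measurableSet_singleton a)
  have hsplit : ∀ ω, F (N ω) ω = ∑' a, (N ⁻¹' {a}).indicator (F a) ω := fun ω => by
    rw [tsum_eq_single (N ω) fun a ha =>
        Set.indicator_of_notMem (s := N ⁻¹' {a}) (Ne.symm ha) (F a),
      Set.indicator_of_mem (s := N ⁻¹' {N ω}) rfl]
  simp_rw [hsplit]
  rw [lintegral_tsum fun a => (((hF a).mono h₂ le_rfl).indicator (h₁ _ (hfiber a))).aemeasurable]
  refine tsum_congr fun a => ?_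
  have hprod := lintegral_mul_eq_lintegral_mul_lintegral_of_independent_measurableSpace
    (f := (N ⁻¹' {a}).indicator 1) h₁ h₂ hind (measurable_const.indicator (hfiber a)) (hF a)
  rw [lintegral_indicator_one (h₁ _ (hfiber a))] at hprod
  rw [← hprod]
  congr 1 with ω
  by_cases hω : ω ∈ N ⁻¹' {a} <;> simp [hω]

lemma lintegral_comp_eq_lintegral_lintegral_of_indep [IsProbabilityMeasure μ] {α : Type*}
    [MeasurableSpace α] [Countable α] [MeasurableSingletonClass α] {m₁ m₂ : MeasurableSpace Ω}
    (h₁ : m₁ ≤ mΩ) (h₂ : m₂ ≤ mΩ) (hind : Indep m₁ m₂ μ) {N : Ω → α} (hN : Measurable[m₁] N)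
    {F : α → Ω → ℝ≥0∞} (hF : ∀ a, Measurable[m₂] (F a)) :
    ∫⁻ ω, F (N ω) ω ∂μ = ∫⁻ ω, ∫⁻ ω', F (N ω) ω' ∂μ ∂μ := by
  rw [lintegral_comp_eq_tsum_of_indep h₁ h₂ hind hN hF,
    lintegral_comp_eq_tsum_of_indep h₁ h₂ hind hN (F := fun a _ => ∫⁻ ω', F a ω' ∂μ)
      fun _ => measurable_const]
  simp

lemma lintegral_sum_sq_of_indepFun {ι : Type*} [DecidableEq ι] (s : Finset ι)
    {f : ι → Ω → ℝ≥0∞} (hf : ∀ i, Measurable (f i))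
    (hind : Pairwise fun i j => IndepFun (f i) (f j) μ) {v : ι → ℝ≥0∞}
    (hv : ∀ i ∈ s, ∫⁻ ω, f i ω ^ 2 ∂μ = v i + (∫⁻ ω, f i ω ∂μ) ^ 2) :
    ∫⁻ ω, (∑ i ∈ s, f i ω) ^ 2 ∂μ = ∑ i ∈ s, v i + (∑ i ∈ s, ∫⁻ ω, f i ω ∂μ) ^ 2 := by
  induction s using Finset.induction_on with
  | empty => simp
  | insert a s ha ih =>
    have hS : Measurable fun ω => ∑ i ∈ s, f i ω := Finset.measurable_sum _ fun i _ => hf i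
    have hcross : ∫⁻ ω, f a ω * ∑ i ∈ s, f i ω ∂μ
        = (∫⁻ ω, f a ω ∂μ) * ∑ i ∈ s, ∫⁻ ω, f i ω ∂μ := by
      simp_rw [Finset.mul_sum]
      rw [lintegral_finsetSum _ fun i _ => (hf a).fun_mul (hf i)]
      refine Finset.sum_congr rfl fun i hi => ?_
      exact lintegral_mul_eq_lintegral_mul_lintegral_of_indepFun (hf a) (hf i)
        (hind fun h => ha (h ▸ hi))
    calc ∫⁻ ω, (∑ i ∈ insert a s, f i ω) ^ 2 ∂μ
        = ∫⁻ ω, (f a ω ^ 2 + (2 * (f a ω * ∑ i ∈ s, f i ω) + (∑ i ∈ s, f i ω) ^ 2)) ∂μ := by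
          congr 1 with ω
          rw [Finset.sum_insert ha]
          ring
      _ = ∫⁻ ω, f a ω ^ 2 ∂μ
            + (2 * ∫⁻ ω, f a ω * ∑ i ∈ s, f i ω ∂μ + ∫⁻ ω, (∑ i ∈ s, f i ω) ^ 2 ∂μ) := by
          rw [lintegral_add_left ((hf a).pow_const 2), lintegral_add_left
            (((hf a).fun_mul hS).const_mul 2), lintegral_const_mul _ ((hf a).fun_mul hS)]
      _ = _ := by
          rw [hv a (Finset.mem_insert_self a s), hcross,
            ih fun i hi => hv i (Finset.mem_insert_of_mem hi), Finset.sum_insert ha,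
            Finset.sum_insert ha]
          ring

lemma lintegral_ofReal_sq_eq_variance_add [IsProbabilityMeasure μ] {f : Ω → ℝ}
    (hf : MemLp f 2 μ) (h0 : 0 ≤ f) :
    ∫⁻ ω, ENNReal.ofReal (f ω) ^ 2 ∂μ
      = ENNReal.ofReal (variance f μ) + (∫⁻ ω, ENNReal.ofReal (f ω) ∂μ) ^ 2 := by
  have hmean := ofReal_integral_eq_lintegral_ofReal (hf.integrable one_le_two) (ae_of_all _ h0)
  have hsq := ofReal_integral_eq_lintegral_ofReal hf.integrable_sq
    (ae_of_all _ fun ω => sq_nonneg (f ω))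
  simp_rw [← ENNReal.ofReal_pow (h0 _), ← hsq, ← hmean, ← ENNReal.ofReal_pow (integral_nonneg h0),
    ← ENNReal.ofReal_add (variance_nonneg f μ) (sq_nonneg _), variance_eq_sub hf]
  simp

lemma lintegral_natCast_eq_ofReal_integral {Y : Ω → ℕ} (hY : Integrable (fun ω => (Y ω : ℝ)) μ) :
    ∫⁻ ω, (Y ω : ℝ≥0∞) ∂μ = ENNReal.ofReal (∫ ω, (Y ω : ℝ) ∂μ) := by
  rw [ofReal_integral_eq_lintegral_ofReal hY (ae_of_all _ fun _ => Nat.cast_nonneg _)]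
  simp

end

section

-- Multiplying by `ρ` avoids the exponent `n - 1`, so that the bounds also hold at `n = 0`.
theorem mul_le_pow_of_moment_recursion {A B D : ℕ → ℝ≥0∞} {mx my vx vy ρ c : ℝ≥0∞}
    (hA0 : A 0 = 0) (hA1 : A 1 = 1) (hB0 : B 0 = 0) (hB1 : B 1 = 1) (hD0 : D 0 = 0)
    (hA : ∀ n, A (n + 2) = mx * A (n + 1) + my * A n)
    (hB : ∀ n, B (n + 2) = vx * A (n + 1) + vy * A n + mx ^ 2 * B (n + 1) + my ^ 2 * B n
      + 2 * mx * my * D n)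
    (hD : ∀ n, D (n + 1) = mx * B (n + 1) + my * D n)
    (h₁ : mx * ρ + my ≤ ρ ^ 2) (h₂ : mx + my ≤ ρ)
    (h₃ : mx ^ 2 * ρ + 2 * mx * my * ρ + my ^ 2 ≤ ρ ^ 3)
    (h₄ : vx * ρ + vy + c * ρ ^ 3 ≤ c * ρ ^ 2) (hc : 1 ≤ c) (n : ℕ) :
    ρ * A n ≤ ρ ^ n ∧ ρ * B n ≤ c * ρ ^ n ∧ ρ * D n ≤ c * ρ ^ (n + 1) := by
  induction n using Nat.twoStepInduction with
  | zero => simp [hA0, hB0, hD0]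
  | one =>
    have hmx : mx ≤ ρ := le_self_add.trans h₂
    refine ⟨by simp [hA1], ?_, ?_⟩
    · rw [hB1, mul_one, pow_one]
      exact le_mul_of_one_le_left bot_le hc
    · calc ρ * D 1 = ρ * mx := by simp [hD 0, hB1, hD0]
        _ ≤ 1 * ρ ^ 2 := by rw [one_mul, sq]; gcongr
        _ ≤ c * ρ ^ (1 + 1) := by gcongr
  | more n ih₀ ih₁ =>
    obtain ⟨hA₀, hB₀, hD₀⟩ := ih₀
    obtain ⟨hA₁, hB₁, hD₁⟩ := ih₁
    have hB₂ : ρ * B (n + 2) ≤ c * ρ ^ (n + 2) :=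
      calc ρ * B (n + 2) = vx * (ρ * A (n + 1)) + vy * (ρ * A n) + mx ^ 2 * (ρ * B (n + 1))
            + my ^ 2 * (ρ * B n) + 2 * mx * my * (ρ * D n) := by rw [hB]; ring
        _ ≤ vx * ρ ^ (n + 1) + vy * ρ ^ n + mx ^ 2 * (c * ρ ^ (n + 1)) + my ^ 2 * (c * ρ ^ n)
            + 2 * mx * my * (c * ρ ^ (n + 1)) := by gcongr
        _ = (vx * ρ + vy + c * (mx ^ 2 * ρ + 2 * mx * my * ρ + my ^ 2)) * ρ ^ n := by ring
        _ ≤ (vx * ρ + vy + c * ρ ^ 3) * ρ ^ n := by gcongr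
        _ ≤ c * ρ ^ 2 * ρ ^ n := by gcongr
        _ = c * ρ ^ (n + 2) := by ring
    refine ⟨?_, hB₂, ?_⟩
    · calc ρ * A (n + 2) = mx * (ρ * A (n + 1)) + my * (ρ * A n) := by rw [hA]; ring
        _ ≤ mx * ρ ^ (n + 1) + my * ρ ^ n := by gcongr
        _ = (mx * ρ + my) * ρ ^ n := by ring
        _ ≤ ρ ^ 2 * ρ ^ n := by gcongr
        _ = ρ ^ (n + 2) := by ring
    · calc ρ * D (n + 2) = mx * (ρ * B (n + 2)) + my * (ρ * D (n + 1)) := by rw [hD]; ring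
        _ ≤ mx * (c * ρ ^ (n + 2)) + my * (c * ρ ^ (n + 1 + 1)) := by gcongr
        _ = (mx + my) * (c * ρ ^ (n + 2)) := by ring
        _ ≤ ρ * (c * ρ ^ (n + 2)) := by gcongr
        _ = c * ρ ^ (n + 2 + 1) := by ring

lemma sq_eq_mul_add_of_eq_add_sqrt {a b ρ : ℝ} (hab : 0 ≤ a ^ 2 + 4 * b)
    (hρ : ρ = (a + √(a ^ 2 + 4 * b)) / 2) : ρ ^ 2 = a * ρ + b := by
  subst hρ
  linear_combination Real.sq_sqrt hab / 4

variable {a b ρ : ℝ}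

lemma add_le_of_sq_eq_mul_add (hb : 0 ≤ b) (hρ0 : 0 < ρ) (hρ1 : ρ ≤ 1)
    (hρ : ρ ^ 2 = a * ρ + b) : a + b ≤ ρ := by
  nlinarith

lemma sq_mul_add_le_pow_three_of_sq_eq_mul_add (ha : 0 ≤ a) (hb : 0 ≤ b) (hρ0 : 0 < ρ)
    (hρ1 : ρ ≤ 1) (hρ : ρ ^ 2 = a * ρ + b) : a ^ 2 * ρ + 2 * a * b * ρ + b ^ 2 ≤ ρ ^ 3 := by
  nlinarith [mul_nonneg (mul_nonneg ha hb) (sub_nonneg.2 hρ1),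
    mul_nonneg (sq_nonneg b) (sub_nonneg.2 hρ1)]

lemma one_le_and_mul_add_add_mul_pow_three_le {u w c : ℝ} (hu : 0 ≤ u) (hw : 0 ≤ w)
    (hρ0 : 0 < ρ) (hρ1 : ρ < 1) (hc : c = 1 + u / (ρ * (1 - ρ)) + w / (ρ ^ 2 * (1 - ρ))) :
    1 ≤ c ∧ u * ρ + w + c * ρ ^ 3 ≤ c * ρ ^ 2 := by
  have hρ' : 0 < 1 - ρ := sub_pos.2 hρ1
  have hc1 : 1 ≤ c := by
    rw [hc, add_assoc]
    exact le_add_of_nonneg_right (by positivity)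
  have hcρ : c * (ρ ^ 2 * (1 - ρ)) = ρ ^ 2 * (1 - ρ) + u * ρ + w := by
    rw [hc]; field_simp
  exact ⟨hc1, by nlinarith [mul_pos (pow_pos hρ0 2) hρ']⟩

end

section

variable {Ω : Type*}

def offspring (ξ η : ℕ → ℕ → Ω → ℕ) : (ℕ × ℕ) ⊕ (ℕ × ℕ) → Ω → ℕ :=
  Sum.elim (fun p => ξ p.1 p.2) (fun p => η p.1 p.2)

def offspringGeneration : (ℕ × ℕ) ⊕ (ℕ × ℕ) → ℕ :=
  Sum.elim Prod.fst Prod.fst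

abbrev offspringσ (ξ η : ℕ → ℕ → Ω → ℕ) (T : Set ℕ) : MeasurableSpace Ω :=
  ⨆ i ∈ offspringGeneration ⁻¹' T, MeasurableSpace.comap (offspring ξ η i) inferInstance

def generationSum (ξ η : ℕ → ℕ → Ω → ℕ) (n k l : ℕ) (ω : Ω) : ℕ :=
  ∑ i ∈ Finset.range k, ξ n i ω + ∑ j ∈ Finset.range l, η n j ω

variable {ξ η : ℕ → ℕ → Ω → ℕ}

lemma offspringσ_mono {T T' : Set ℕ} (h : T ⊆ T') : offspringσ ξ η T ≤ offspringσ ξ η T' :=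
  biSup_mono fun _ hi => h hi

lemma measurable_offspring_offspringσ {T : Set ℕ} {i : (ℕ × ℕ) ⊕ (ℕ × ℕ)}
    (hi : offspringGeneration i ∈ T) : Measurable[offspringσ ξ η T] (offspring ξ η i) :=
  measurable_iff_comap_le.2 (le_biSup (fun i => MeasurableSpace.comap (offspring ξ η i) _) hi)

lemma measurable_generationSum_offspringσ {n : ℕ} {T : Set ℕ} (hn : n ∈ T) (k l : ℕ) :
    Measurable[offspringσ ξ η T] (generationSum ξ η n k l) :=
  (Finset.measurable_sum _ fun i _ => measurable_offspring_offspringσ (i := .inl (n, i)) hn).add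
    (Finset.measurable_sum _ fun j _ => measurable_offspring_offspringσ (i := .inr (n, j)) hn)

structure IsSecondOrderGaltonWatson [MeasurableSpace Ω] (μ : Measure Ω) (X : ℕ → Ω → ℕ)
    (ξ η : ℕ → ℕ → Ω → ℕ) : Prop where
  measurable_ξ : ∀ n i, Measurable (ξ n i)
  measurable_η : ∀ n i, Measurable (η n i)
  X_zero : ∀ ω, X 0 ω = 0
  X_one : ∀ ω, X 1 ω = 1
  X_add_two : ∀ n ω, X (n + 2) ω = generationSum ξ η (n + 2) (X (n + 1) ω) (X n ω) ω
  iIndepFun_offspring : iIndepFun (offspring ξ η) μ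
  identDistrib_ξ : ∀ n i, IdentDistrib (ξ n i) (ξ 0 0) μ μ
  identDistrib_η : ∀ n i, IdentDistrib (η n i) (η 0 0) μ μ

namespace IsSecondOrderGaltonWatson

variable [MeasurableSpace Ω] {μ : Measure Ω} {X : ℕ → Ω → ℕ}

lemma measurable_offspring (h : IsSecondOrderGaltonWatson μ X ξ η) (i : (ℕ × ℕ) ⊕ (ℕ × ℕ)) :
    Measurable (offspring ξ η i) := by
  rcases i with ⟨n, i⟩ | ⟨n, j⟩
  exacts [h.measurable_ξ n i, h.measurable_η n j]

lemma offspringσ_le (h : IsSecondOrderGaltonWatson μ X ξ η) (T : Set ℕ) :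
    offspringσ ξ η T ≤ ‹MeasurableSpace Ω› :=
  iSup₂_le fun i _ => (h.measurable_offspring i).comap_le

lemma indep_offspringσ (h : IsSecondOrderGaltonWatson μ X ξ η) {T T' : Set ℕ}
    (hT : Disjoint T T') :
    Indep (offspringσ ξ η T) (offspringσ ξ η T') μ :=
  indep_iSup_of_disjoint (fun i => (h.measurable_offspring i).comap_le)
    h.iIndepFun_offspring.iIndep (hT.preimage _)

lemma measurable_offspringσ_Iic (h : IsSecondOrderGaltonWatson μ X ξ η) (n : ℕ) :
    Measurable[offspringσ ξ η (Set.Iic n)] (X n) := by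
  induction n using Nat.twoStepInduction with
  | zero => simp [funext h.X_zero]
  | one => simp [funext h.X_one]
  | more n ih₀ ih₁ =>
    have hX : X (n + 2) = fun ω => generationSum ξ η (n + 2) (X (n + 1) ω) (X n ω) ω :=
      funext (h.X_add_two n)
    rw [hX]
    exact (measurable_randomSum (ih₁.mono (offspringσ_mono (by simp)) le_rfl) fun i =>
        measurable_offspring_offspringσ (i := .inl (n + 2, i)) (by simp [offspringGeneration])).add
      (measurable_randomSum (ih₀.mono (offspringσ_mono (by simp)) le_rfl) fun j =>
        measurable_offspring_offspringσ (i := .inr (n + 2, j)) (by simp [offspringGeneration]))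

lemma measurable (h : IsSecondOrderGaltonWatson μ X ξ η) (n : ℕ) : Measurable (X n) :=
  (h.measurable_offspringσ_Iic n).mono (h.offspringσ_le _) le_rfl

lemma lintegral_comp_add_two [IsProbabilityMeasure μ] (h : IsSecondOrderGaltonWatson μ X ξ η)
    (n : ℕ) (G : ℕ → ℕ → ℕ → ℝ≥0∞) :
    ∫⁻ ω, G (X (n + 2) ω) (X (n + 1) ω) (X n ω) ∂μ
      = ∫⁻ ω, ∫⁻ ω', G (generationSum ξ η (n + 2) (X (n + 1) ω) (X n ω) ω')
          (X (n + 1) ω) (X n ω) ∂μ ∂μ := by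
  have hind := h.indep_offspringσ (μ := μ) (T := Set.Iic (n + 1)) (T' := {n + 2}) (by simp)
  have hpast : Measurable[offspringσ ξ η (Set.Iic (n + 1))] fun ω => (X (n + 1) ω, X n ω) :=
    (h.measurable_offspringσ_Iic (n + 1)).prodMk ((h.measurable_offspringσ_Iic n).mono
      (offspringσ_mono (Set.Iic_subset_Iic.2 n.le_succ)) le_rfl)
  have hnext : ∀ p : ℕ × ℕ, Measurable[offspringσ ξ η {n + 2}]
      fun ω' => G (generationSum ξ η (n + 2) p.1 p.2 ω') p.1 p.2 := fun p =>
    (measurable_from_top (f := fun a : ℕ => G a p.1 p.2)).comp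
      (measurable_generationSum_offspringσ (Set.mem_singleton _) _ _)
  calc ∫⁻ ω, G (X (n + 2) ω) (X (n + 1) ω) (X n ω) ∂μ
      = ∫⁻ ω, G (generationSum ξ η (n + 2) (X (n + 1) ω) (X n ω) ω) (X (n + 1) ω) (X n ω) ∂μ :=
        lintegral_congr fun ω => by rw [h.X_add_two n ω]
    _ = _ := lintegral_comp_eq_lintegral_lintegral_of_indep (h.offspringσ_le _)
        (h.offspringσ_le _) hind hpast hnext

lemma lintegral_comp_ξ (h : IsSecondOrderGaltonWatson μ X ξ η) (u : ℕ → ℝ≥0∞) (n i : ℕ) :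
    ∫⁻ ω, u (ξ n i ω) ∂μ = ∫⁻ ω, u (ξ 0 0 ω) ∂μ :=
  ((h.identDistrib_ξ n i).comp measurable_from_top).lintegral_eq

lemma lintegral_comp_η (h : IsSecondOrderGaltonWatson μ X ξ η) (u : ℕ → ℝ≥0∞) (n j : ℕ) :
    ∫⁻ ω, u (η n j ω) ∂μ = ∫⁻ ω, u (η 0 0 ω) ∂μ :=
  ((h.identDistrib_η n j).comp measurable_from_top).lintegral_eq

lemma lintegral_generationSum (h : IsSecondOrderGaltonWatson μ X ξ η) (n k l : ℕ) :
    ∫⁻ ω, (generationSum ξ η n k l ω : ℝ≥0∞) ∂μ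
      = k * ∫⁻ ω, (ξ 0 0 ω : ℝ≥0∞) ∂μ + l * ∫⁻ ω, (η 0 0 ω : ℝ≥0∞) ∂μ := by
  have := h.measurable_ξ
  have := h.measurable_η
  simp only [generationSum, Nat.cast_add, Nat.cast_sum]
  rw [lintegral_add_left (by fun_prop), lintegral_finsetSum _ fun i _ => by fun_prop,
    lintegral_finsetSum _ fun j _ => by fun_prop]
  simp [h.lintegral_comp_ξ (fun a => (a : ℝ≥0∞)), h.lintegral_comp_η (fun a => (a : ℝ≥0∞))]

lemma lintegral_generationSum_sq (h : IsSecondOrderGaltonWatson μ X ξ η) {vx vy : ℝ≥0∞}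
    (hvx : ∫⁻ ω, (ξ 0 0 ω : ℝ≥0∞) ^ 2 ∂μ = vx + (∫⁻ ω, (ξ 0 0 ω : ℝ≥0∞) ∂μ) ^ 2)
    (hvy : ∫⁻ ω, (η 0 0 ω : ℝ≥0∞) ^ 2 ∂μ = vy + (∫⁻ ω, (η 0 0 ω : ℝ≥0∞) ∂μ) ^ 2) (n k l : ℕ) :
    ∫⁻ ω, (generationSum ξ η n k l ω : ℝ≥0∞) ^ 2 ∂μ
      = k * vx + l * vy
        + (k * ∫⁻ ω, (ξ 0 0 ω : ℝ≥0∞) ∂μ + l * ∫⁻ ω, (η 0 0 ω : ℝ≥0∞) ∂μ) ^ 2 := by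
  set g : ℕ ⊕ ℕ → Ω → ℝ≥0∞ := fun s ω => offspring ξ η (Sum.map (Prod.mk n) (Prod.mk n) s) ω
  have hg : ∀ s, Measurable (g s) := fun s => measurable_from_top.comp (h.measurable_offspring _)
  have hind : Pairwise fun s t => IndepFun (g s) (g t) μ := fun s t hst =>
    (h.iIndepFun_offspring.indepFun ((Sum.map_injective.2 ⟨Prod.mk_right_injective n,
      Prod.mk_right_injective n⟩).ne hst)).comp measurable_from_top measurable_from_top
  have hmean : ∀ s, ∫⁻ ω, g s ω ∂μ = Sum.elim (fun _ => ∫⁻ ω, (ξ 0 0 ω : ℝ≥0∞) ∂μ)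
      (fun _ => ∫⁻ ω, (η 0 0 ω : ℝ≥0∞) ∂μ) s := by
    rintro (i | j)
    exacts [h.lintegral_comp_ξ (fun a => (a : ℝ≥0∞)) n i,
      h.lintegral_comp_η (fun a => (a : ℝ≥0∞)) n j]
  have hsq : ∀ s ∈ (Finset.range k).disjSum (Finset.range l), ∫⁻ ω, g s ω ^ 2 ∂μ
      = Sum.elim (fun _ => vx) (fun _ => vy) s + (∫⁻ ω, g s ω ∂μ) ^ 2 := by
    rintro (i | j) -
    · rw [hmean]; exact (h.lintegral_comp_ξ (fun a => (a : ℝ≥0∞) ^ 2) n i).trans hvx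
    · rw [hmean]; exact (h.lintegral_comp_η (fun a => (a : ℝ≥0∞) ^ 2) n j).trans hvy
  have hsum : ∀ ω, (generationSum ξ η n k l ω : ℝ≥0∞)
      = ∑ s ∈ (Finset.range k).disjSum (Finset.range l), g s ω := fun ω => by
    simp [generationSum, Finset.sum_disjSum, g, offspring]
  simp_rw [hsum, lintegral_sum_sq_of_indepFun _ hg hind hsq, hmean]
  simp [Finset.sum_disjSum]

section

variable [IsProbabilityMeasure μ]

lemma lintegral_add_two (h : IsSecondOrderGaltonWatson μ X ξ η) (n : ℕ) :
    ∫⁻ ω, (X (n + 2) ω : ℝ≥0∞) ∂μ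
      = (∫⁻ ω, (ξ 0 0 ω : ℝ≥0∞) ∂μ) * ∫⁻ ω, (X (n + 1) ω : ℝ≥0∞) ∂μ
        + (∫⁻ ω, (η 0 0 ω : ℝ≥0∞) ∂μ) * ∫⁻ ω, (X n ω : ℝ≥0∞) ∂μ := by
  have := h.measurable
  have hfreeze := h.lintegral_comp_add_two n fun a _ _ => (a : ℝ≥0∞)
  simp only [h.lintegral_generationSum] at hfreeze
  rw [hfreeze]
  simp (disch := fun_prop) only [lintegral_add_left, lintegral_mul_const]
  ring

lemma lintegral_mul_add_two (h : IsSecondOrderGaltonWatson μ X ξ η) (n : ℕ) :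
    ∫⁻ ω, (X (n + 2) ω : ℝ≥0∞) * X (n + 1) ω ∂μ
      = (∫⁻ ω, (ξ 0 0 ω : ℝ≥0∞) ∂μ) * ∫⁻ ω, (X (n + 1) ω : ℝ≥0∞) ^ 2 ∂μ
        + (∫⁻ ω, (η 0 0 ω : ℝ≥0∞) ∂μ) * ∫⁻ ω, (X (n + 1) ω : ℝ≥0∞) * X n ω ∂μ := by
  have := h.measurable
  have hfreeze := h.lintegral_comp_add_two n fun a b _ => (a : ℝ≥0∞) * b
  simp only [lintegral_mul_const' _ _ (ENNReal.natCast_ne_top _), h.lintegral_generationSum]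
    at hfreeze
  rw [hfreeze]
  have hexp : ∀ ω, ((X (n + 1) ω : ℝ≥0∞) * ∫⁻ ω, (ξ 0 0 ω : ℝ≥0∞) ∂μ
      + (X n ω : ℝ≥0∞) * ∫⁻ ω, (η 0 0 ω : ℝ≥0∞) ∂μ) * (X (n + 1) ω : ℝ≥0∞)
      = (∫⁻ ω, (ξ 0 0 ω : ℝ≥0∞) ∂μ) * (X (n + 1) ω : ℝ≥0∞) ^ 2
        + (∫⁻ ω, (η 0 0 ω : ℝ≥0∞) ∂μ) * ((X (n + 1) ω : ℝ≥0∞) * X n ω) := fun ω => by ring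
  simp_rw [hexp]
  simp (disch := fun_prop) only [lintegral_add_left, lintegral_const_mul]

lemma lintegral_sq_add_two (h : IsSecondOrderGaltonWatson μ X ξ η) {vx vy : ℝ≥0∞}
    (hvx : ∫⁻ ω, (ξ 0 0 ω : ℝ≥0∞) ^ 2 ∂μ = vx + (∫⁻ ω, (ξ 0 0 ω : ℝ≥0∞) ∂μ) ^ 2)
    (hvy : ∫⁻ ω, (η 0 0 ω : ℝ≥0∞) ^ 2 ∂μ = vy + (∫⁻ ω, (η 0 0 ω : ℝ≥0∞) ∂μ) ^ 2) (n : ℕ) :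
    ∫⁻ ω, (X (n + 2) ω : ℝ≥0∞) ^ 2 ∂μ
      = vx * ∫⁻ ω, (X (n + 1) ω : ℝ≥0∞) ∂μ + vy * ∫⁻ ω, (X n ω : ℝ≥0∞) ∂μ
        + (∫⁻ ω, (ξ 0 0 ω : ℝ≥0∞) ∂μ) ^ 2 * ∫⁻ ω, (X (n + 1) ω : ℝ≥0∞) ^ 2 ∂μ
        + (∫⁻ ω, (η 0 0 ω : ℝ≥0∞) ∂μ) ^ 2 * ∫⁻ ω, (X n ω : ℝ≥0∞) ^ 2 ∂μ
        + 2 * (∫⁻ ω, (ξ 0 0 ω : ℝ≥0∞) ∂μ) * (∫⁻ ω, (η 0 0 ω : ℝ≥0∞) ∂μ)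
          * ∫⁻ ω, (X (n + 1) ω : ℝ≥0∞) * X n ω ∂μ := by
  have := h.measurable
  have hfreeze := h.lintegral_comp_add_two n fun a _ _ => (a : ℝ≥0∞) ^ 2
  simp only [h.lintegral_generationSum_sq hvx hvy] at hfreeze
  rw [hfreeze]
  set mx := ∫⁻ ω, (ξ 0 0 ω : ℝ≥0∞) ∂μ
  set my := ∫⁻ ω, (η 0 0 ω : ℝ≥0∞) ∂μ
  have hexp : ∀ ω, (X (n + 1) ω : ℝ≥0∞) * vx + (X n ω : ℝ≥0∞) * vy
      + ((X (n + 1) ω : ℝ≥0∞) * mx + (X n ω : ℝ≥0∞) * my) ^ 2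
      = vx * (X (n + 1) ω : ℝ≥0∞) + vy * (X n ω : ℝ≥0∞) + mx ^ 2 * (X (n + 1) ω : ℝ≥0∞) ^ 2
        + my ^ 2 * (X n ω : ℝ≥0∞) ^ 2 + 2 * mx * my * ((X (n + 1) ω : ℝ≥0∞) * X n ω) :=
    fun ω => by ring
  simp_rw [hexp]
  simp (disch := fun_prop) only [lintegral_add_left, lintegral_const_mul]

theorem integral_sq_le (h : IsSecondOrderGaltonWatson μ X ξ η)
    (hξ2 : MemLp (fun ω => (ξ 0 0 ω : ℝ)) 2 μ) (hη2 : MemLp (fun ω => (η 0 0 ω : ℝ)) 2 μ)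
    {mx my ρ c : ℝ} (hmx : mx = ∫ ω, (ξ 0 0 ω : ℝ) ∂μ) (hmy : my = ∫ ω, (η 0 0 ω : ℝ) ∂μ)
    (hρ0 : 0 < ρ) (h₁ : mx * ρ + my ≤ ρ ^ 2) (h₂ : mx + my ≤ ρ)
    (h₃ : mx ^ 2 * ρ + 2 * mx * my * ρ + my ^ 2 ≤ ρ ^ 3)
    (h₄ : variance (fun ω => (ξ 0 0 ω : ℝ)) μ * ρ + variance (fun ω => (η 0 0 ω : ℝ)) μ
      + c * ρ ^ 3 ≤ c * ρ ^ 2)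
    (hc : 1 ≤ c) (n : ℕ) :
    ∫ ω, (X (n + 1) ω : ℝ) ^ 2 ∂μ ≤ c * ρ ^ n := by
  have hmx0 : 0 ≤ mx := hmx ▸ integral_nonneg fun ω => Nat.cast_nonneg _
  have hmy0 : 0 ≤ my := hmy ▸ integral_nonneg fun ω => Nat.cast_nonneg _
  have hvx0 := variance_nonneg (fun ω => (ξ 0 0 ω : ℝ)) μ
  have hvy0 := variance_nonneg (fun ω => (η 0 0 ω : ℝ)) μ
  have hmxE : ∫⁻ ω, (ξ 0 0 ω : ℝ≥0∞) ∂μ = ENNReal.ofReal mx :=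
    hmx ▸ lintegral_natCast_eq_ofReal_integral (hξ2.integrable one_le_two)
  have hmyE : ∫⁻ ω, (η 0 0 ω : ℝ≥0∞) ∂μ = ENNReal.ofReal my :=
    hmy ▸ lintegral_natCast_eq_ofReal_integral (hη2.integrable one_le_two)
  have hvx := lintegral_ofReal_sq_eq_variance_add hξ2 fun ω => Nat.cast_nonneg _
  have hvy := lintegral_ofReal_sq_eq_variance_add hη2 fun ω => Nat.cast_nonneg _
  simp only [ENNReal.ofReal_natCast] at hvx hvy
  have e₁ := ENNReal.ofReal_le_ofReal h₁
  have e₂ := ENNReal.ofReal_le_ofReal h₂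
  have e₃ := ENNReal.ofReal_le_ofReal h₃
  have e₄ := ENNReal.ofReal_le_ofReal h₄
  simp (disch := positivity) only [ENNReal.ofReal_add, ENNReal.ofReal_mul, ENNReal.ofReal_pow,
    ENNReal.ofReal_ofNat] at e₁ e₂ e₃ e₄
  have hbound := mul_le_pow_of_moment_recursion
    (A := fun n => ∫⁻ ω, (X n ω : ℝ≥0∞) ∂μ) (B := fun n => ∫⁻ ω, (X n ω : ℝ≥0∞) ^ 2 ∂μ)
    (D := fun n => ∫⁻ ω, (X (n + 1) ω : ℝ≥0∞) * X n ω ∂μ)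
    (by simp [h.X_zero]) (by simp [h.X_one]) (by simp [h.X_zero]) (by simp [h.X_one])
    (by simp [h.X_zero])
    h.lintegral_add_two (h.lintegral_sq_add_two hvx hvy) h.lintegral_mul_add_two
    (by rwa [hmxE, hmyE]) (by rwa [hmxE, hmyE]) (by rwa [hmxE, hmyE]) e₄
    (ENNReal.one_le_ofReal.2 hc) (n + 1)
  have hB : ∫⁻ ω, (X (n + 1) ω : ℝ≥0∞) ^ 2 ∂μ ≤ ENNReal.ofReal (c * ρ ^ n) := by
    rw [ENNReal.ofReal_mul (by linarith), ENNReal.ofReal_pow hρ0.le,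
      ← ENNReal.mul_le_mul_iff_right (ENNReal.ofReal_pos.2 hρ0).ne' ENNReal.ofReal_ne_top]
    exact hbound.2.1.trans_eq (by ring)
  rw [integral_eq_lintegral_of_nonneg_ae (ae_of_all _ fun ω => by positivity)
    (by have := h.measurable; fun_prop)]
  refine ENNReal.toReal_le_of_le_ofReal (by positivity) (le_of_eq_of_le ?_ hB)
  simp [ENNReal.ofReal_pow]

end

end IsSecondOrderGaltonWatson

end

/-- Time is shifted: `X 0` is the paper's `X₋₁` and `X 1` is its `X₀`, so the paper's `Xₙ` is
`X (n+1)`. -/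
theorem stmt19_general {Ω : Type*} [MeasurableSpace Ω] (μ : Measure Ω) [IsProbabilityMeasure μ]
    (X : ℕ → Ω → ℕ) (ξ η : ℕ → ℕ → Ω → ℕ)
    (hξm : ∀ n i, Measurable (ξ n i)) (hηm : ∀ n i, Measurable (η n i))
    (hinit0 : ∀ ω, X 0 ω = 0) (hinit1 : ∀ ω, X 1 ω = 1)
    (hrec : ∀ n, 2 ≤ n → ∀ ω, X n ω =
      ∑ i ∈ Finset.range (X (n - 1) ω), ξ n i ω +
        ∑ j ∈ Finset.range (X (n - 2) ω), η n j ω)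
    (hindep : iIndepFun
      (Sum.elim (fun p : ℕ × ℕ => ξ p.1 p.2) (fun p : ℕ × ℕ => η p.1 p.2)) μ)
    (hξid : ∀ n i, IdentDistrib (ξ n i) (ξ 0 0) μ μ)
    (hηid : ∀ n i, IdentDistrib (η n i) (η 0 0) μ μ)
    (hξ2 : Integrable (fun ω => (ξ 0 0 ω : ℝ) ^ 2) μ)
    (hη2 : Integrable (fun ω => (η 0 0 ω : ℝ) ^ 2) μ)
    (mξ mη ϱ : ℝ)
    (hmξ : mξ = ∫ ω, (ξ 0 0 ω : ℝ) ∂μ) (hmη : mη = ∫ ω, (η 0 0 ω : ℝ) ∂μ)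
    (hϱ : ϱ = (mξ + Real.sqrt (mξ ^ 2 + 4 * mη)) / 2)
    (hϱ0 : 0 < ϱ) (hϱ1 : ϱ < 1)
    (c : ℝ)
    (hc : c = 1 + variance (fun ω => (ξ 0 0 ω : ℝ)) μ / (ϱ * (1 - ϱ))
            + variance (fun ω => (η 0 0 ω : ℝ)) μ / (ϱ ^ 2 * (1 - ϱ))) :
    ∀ n, 1 ≤ n → (∫ ω, (X (n + 1) ω : ℝ) ^ 2 ∂μ) ≤ c * ϱ ^ n := by
  intro n _
  have hgw : IsSecondOrderGaltonWatson μ X ξ η :=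
    ⟨hξm, hηm, hinit0, hinit1, fun n ω => hrec (n + 2) (by omega) ω, hindep, hξid, hηid⟩
  have hξL2 : MemLp (fun ω => (ξ 0 0 ω : ℝ)) 2 μ :=
    (memLp_two_iff_integrable_sq (by fun_prop)).2 hξ2
  have hηL2 : MemLp (fun ω => (η 0 0 ω : ℝ)) 2 μ :=
    (memLp_two_iff_integrable_sq (by fun_prop)).2 hη2
  have hmξ0 : 0 ≤ mξ := hmξ ▸ integral_nonneg fun ω => Nat.cast_nonneg _
  have hmη0 : 0 ≤ mη := hmη ▸ integral_nonneg fun ω => Nat.cast_nonneg _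
  have hroot : ϱ ^ 2 = mξ * ϱ + mη := sq_eq_mul_add_of_eq_add_sqrt (by positivity) hϱ
  obtain ⟨hc1, hcρ⟩ := one_le_and_mul_add_add_mul_pow_three_le (variance_nonneg _ μ)
    (variance_nonneg _ μ) hϱ0 hϱ1 hc
  exact hgw.integral_sq_le hξL2 hηL2 hmξ hmη hϱ0 hroot.ge
    (add_le_of_sq_eq_mul_add hmη0 hϱ0 hϱ1.le hroot)
    (sq_mul_add_le_pow_three_of_sq_eq_mul_add hmξ0 hmη0 hϱ0 hϱ1.le hroot) hcρ hc1 n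

/-- A second-order Galton–Watson process without immigration started from `X₀ = 1`,
`X₋₁ = 0` (time shifted: `X 0` is `X₋₁` and `X 1` is `X₀`, so the paper's `Xₙ` is `X (n+1)`),
with square-integrable offspring distributions.  If the spectral radius
`ϱ = (m_ξ + √(m_ξ² + 4 m_η))/2` of the mean matrix lies in `(0,1)`, then
`E(Xₙ²) ≤ c ϱⁿ` with `c = 1 + Var(ξ)/(ϱ(1-ϱ)) + Var(η)/(ϱ²(1-ϱ))`. -/
theorem stmt19 {Ω : Type*} [MeasurableSpace Ω] (μ : Measure Ω) [IsProbabilityMeasure μ]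
    (X : ℕ → Ω → ℕ) (ξ η : ℕ → ℕ → Ω → ℕ)
    (hXm : ∀ n, Measurable (X n))
    (hξm : ∀ n i, Measurable (ξ n i)) (hηm : ∀ n i, Measurable (η n i))
    (hinit0 : ∀ ω, X 0 ω = 0) (hinit1 : ∀ ω, X 1 ω = 1)
    (hrec : ∀ n, 2 ≤ n → ∀ ω, X n ω =
      ∑ i ∈ Finset.range (X (n - 1) ω), ξ n i ω +
        ∑ j ∈ Finset.range (X (n - 2) ω), η n j ω)
    (hindep : iIndepFun
      (Sum.elim (fun p : ℕ × ℕ => ξ p.1 p.2) (fun p : ℕ × ℕ => η p.1 p.2)) μ)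
    (hξid : ∀ n i, IdentDistrib (ξ n i) (ξ 0 0) μ μ)
    (hηid : ∀ n i, IdentDistrib (η n i) (η 0 0) μ μ)
    (hξ2 : Integrable (fun ω => (ξ 0 0 ω : ℝ) ^ 2) μ)
    (hη2 : Integrable (fun ω => (η 0 0 ω : ℝ) ^ 2) μ)
    (mξ mη ϱ : ℝ)
    (hmξ : mξ = ∫ ω, (ξ 0 0 ω : ℝ) ∂μ) (hmη : mη = ∫ ω, (η 0 0 ω : ℝ) ∂μ)
    (hϱ : ϱ = (mξ + Real.sqrt (mξ ^ 2 + 4 * mη)) / 2)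
    (hϱ0 : 0 < ϱ) (hϱ1 : ϱ < 1)
    (c : ℝ)
    (hc : c = 1 + variance (fun ω => (ξ 0 0 ω : ℝ)) μ / (ϱ * (1 - ϱ))
            + variance (fun ω => (η 0 0 ω : ℝ)) μ / (ϱ ^ 2 * (1 - ϱ))) :
    ∀ n, 1 ≤ n → (∫ ω, (X (n + 1) ω : ℝ) ^ 2 ∂μ) ≤ c * ϱ ^ n :=
  stmt19_general μ X ξ η hξm hηm hinit0 hinit1 hrec hindep hξid hηid hξ2 hη2 mξ mη ϱ hmξ hmη hϱ hϱ0
    hϱ1 c hc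
end
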